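/- arXiv:1905.02466 — 9 statements merged into one kernel-verified Lean document; each statement's English description precedes it below -/
import Mathlib

section
/- Let X be a compact Hausdorff space, let λ, γ : X → [-∞, 0] be upper semicontinuous functions each attaining the value 0, and define μ, ν : C(X) → ℝ by μ(φ) = sup_{x ∈ X}(λ(x) + φ(x)) and ν(φ) = sup_{x ∈ X}(γ(x) + φ(x)) (with the convention (-∞) + t = -∞). Let S_μ = {x : λ(x) > -∞}, S_ν = {x : γ(x) > -∞}. Let φ ∈ C(X), ε > 0, and let U_1, …, U_n be open subsets of X such that: S_μ ⊆ U_1 ∪ … ∪ U_n, S_ν ⊆ U_1 ∪ … ∪ U_n, S_μ ∩ U_i ≠ ∅ and S_ν ∩ U_i ≠ ∅ for each i, |φ(u) - φ(v)| < ε/2 for all u, v ∈ U_i and each i, and |λ(x) - γ(y)| < ε/2 whenever x ∈ S_μ ∩ U_i and y ∈ S_ν ∩ U_i for some i. Then |μ(φ) - ν(φ)| < ε. -/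
noncomputable section

/-- An idempotent probability measure on a topological space `X`:
a functional `μ : C(X, ℝ) → ℝ` which sends constants to their values,
is `max`-`plus` homogeneous, and turns pointwise maxima into maxima. -/
def IsIPM {X : Type*} [TopologicalSpace X] (μ : C(X, ℝ) → ℝ) : Prop :=
  (∀ c : ℝ, μ (ContinuousMap.const X c) = c) ∧
  (∀ (c : ℝ) (φ : C(X, ℝ)), μ (ContinuousMap.const X c + φ) = c + μ φ) ∧
  (∀ φ ψ : C(X, ℝ), μ (φ ⊔ ψ) = max (μ φ) (μ ψ))

/-- `ξ` is a `(μ₁, μ₂)`-admissible idempotent probability measure on `X × X`. -/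
def IsAdmissible {X : Type*} [TopologicalSpace X]
    (μ₁ μ₂ : C(X, ℝ) → ℝ) (ξ : C(X × X, ℝ) → ℝ) : Prop :=
  IsIPM ξ ∧
  (∀ φ : C(X, ℝ), ξ (φ.comp ⟨Prod.fst, continuous_fst⟩) = μ₁ φ) ∧
  (∀ φ : C(X, ℝ), ξ (φ.comp ⟨Prod.snd, continuous_snd⟩) = μ₂ φ)

/-- The density of an idempotent probability measure. -/
def idemDensity {Z : Type*} [TopologicalSpace Z] (μ : C(Z, ℝ) → ℝ) (z : Z) : EReal :=
  sInf {r : EReal | ∃ φ : C(Z, ℝ), φ ≤ 0 ∧ φ z = 0 ∧ r = (μ φ : EReal)}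

/-- The support of an idempotent probability measure. -/
def idemSupp {Z : Type*} [TopologicalSpace Z] (μ : C(Z, ℝ) → ℝ) : Set Z :=
  {z | ⊥ < idemDensity μ z}

/-- The metric `ρ` of a metric space `X`, as a continuous function on `X × X`. -/
def rhoFun (X : Type*) [MetricSpace X] : C(X × X, ℝ) :=
  ⟨fun p => dist p.1 p.2, continuous_dist⟩

/-- The Uspenskii-type distance function `d_I` on idempotent probability measures. -/
def dI {X : Type*} [MetricSpace X] (μ₁ μ₂ : C(X, ℝ) → ℝ) : ℝ :=
  sInf {r : ℝ | ∃ ξ : C(X × X, ℝ) → ℝ, IsAdmissible μ₁ μ₂ ξ ∧ r = ξ (rhoFun X)}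

/-- The distance function `ρ_I` on idempotent probability measures. -/
def rhoI {X : Type*} [MetricSpace X] (μ₁ μ₂ : C(X, ℝ) → ℝ) : ℝ :=
  sInf {r : ℝ | ∃ ξ : C(X × X, ℝ) → ℝ, IsAdmissible μ₁ μ₂ ξ ∧
    r = sSup {s : ℝ | ∃ p ∈ idemSupp ξ, s = max (ξ (rhoFun X)) (dist p.1 p.2)}}


lemma usc_exists_max {X : Type*} [TopologicalSpace X] [CompactSpace X] [Nonempty X]
    {f : X → EReal} (hf : UpperSemicontinuous f) : ∃ x, ∀ y, f y ≤ f x := by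
  by_contra h
  push_neg at h
  choose y hy using h
  choose c hc1 hc2 using fun x => exists_between (hy x)
  obtain ⟨t, ht⟩ := isCompact_univ.elim_finite_subcover (fun x => f ⁻¹' Set.Iio (c x))
    (fun x => hf.isOpen_preimage (c x)) (fun w _ => Set.mem_iUnion.2 ⟨w, hc1 w⟩)
  have htne : t.Nonempty := by
    obtain ⟨w⟩ := ‹Nonempty X›
    obtain ⟨x, hx, -⟩ := Set.mem_iUnion₂.1 (ht (Set.mem_univ w))
    exact ⟨x, hx⟩
  obtain ⟨x0, hx0t, hx0⟩ := t.exists_mem_eq_sup' htne c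
  obtain ⟨x, hxt, hxy⟩ := Set.mem_iUnion₂.1 (ht (Set.mem_univ (y x0)))
  have h1 : c x ≤ c x0 := hx0 ▸ Finset.le_sup' c hxt
  exact absurd hxy (not_lt.2 (h1.trans (hc2 x0).le))

lemma key_lemma {X : Type*} [TopologicalSpace X] [CompactSpace X]
    (lam gam : X → EReal)
    (hlamusc : UpperSemicontinuous lam)
    (hlamle : ∀ x, lam x ≤ 0) (hgamle : ∀ x, gam x ≤ 0)
    (hlam0 : ∃ x, lam x = 0)
    (μ ν : C(X, ℝ) → ℝ)
    (hμ : ∀ φ : C(X, ℝ), (μ φ : EReal) = ⨆ x, lam x + (φ x : EReal))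
    (hν : ∀ φ : C(X, ℝ), (ν φ : EReal) = ⨆ x, gam x + (φ x : EReal))
    (Sμ Sν : Set X) (hSμ : Sμ = {x | ⊥ < lam x}) (hSν : Sν = {x | ⊥ < gam x})
    (φ : C(X, ℝ)) (ε : ℝ)
    (n : ℕ) (U : Fin n → Set X)
    (hcovμ : Sμ ⊆ ⋃ i, U i)
    (hmeetν : ∀ i, (Sν ∩ U i).Nonempty)
    (hφosc : ∀ i, ∀ u ∈ U i, ∀ v ∈ U i, |φ u - φ v| < ε / 2)
    (hlamgam : ∀ i, ∀ x ∈ Sμ ∩ U i, ∀ y ∈ Sν ∩ U i,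
      |(lam x).toReal - (gam y).toReal| < ε / 2) :
    μ φ - ν φ < ε := by
  have hne : Nonempty X := ⟨hlam0.choose⟩
  set g : X → EReal := fun x => lam x + (φ x : EReal) with hg_def
  have hg : UpperSemicontinuous g := by
    refine hlamusc.add' (Continuous.upperSemicontinuous ?_) fun x =>
      EReal.continuousAt_add (Or.inr (by simp)) (Or.inr (by simp))
    exact continuous_coe_real_ereal.comp φ.continuous
  obtain ⟨x₀, hx₀⟩ := usc_exists_max hg
  have hsup : (μ φ : EReal) = g x₀ :=
    (hμ φ).trans (le_antisymm (iSup_le hx₀) (le_iSup g x₀))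
  have hlbot : lam x₀ ≠ ⊥ := by
    intro hb
    have : (μ φ : EReal) = ⊥ := by rw [hsup]; simp [hg_def, hb]
    exact EReal.coe_ne_bot _ this
  have hltop : lam x₀ ≠ ⊤ := ((hlamle x₀).trans_lt (by norm_num)).ne
  have hx₀Sμ : x₀ ∈ Sμ := by rw [hSμ]; exact bot_lt_iff_ne_bot.2 hlbot
  obtain ⟨i, hiU⟩ := Set.mem_iUnion.1 (hcovμ hx₀Sμ)
  obtain ⟨y, hySν, hyU⟩ := hmeetν i
  have hgbot : gam y ≠ ⊥ := by rw [hSν] at hySν; exact bot_lt_iff_ne_bot.1 hySν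
  have hgtop : gam y ≠ ⊤ := ((hgamle y).trans_lt (by norm_num)).ne
  have hl : lam x₀ = ((lam x₀).toReal : EReal) := (EReal.coe_toReal hltop hlbot).symm
  have hgy : gam y = ((gam y).toReal : EReal) := (EReal.coe_toReal hgtop hgbot).symm
  have hμval : μ φ = (lam x₀).toReal + φ x₀ := by
    have : (μ φ : EReal) = (((lam x₀).toReal + φ x₀ : ℝ) : EReal) := by
      rw [hsup, hg_def]; push_cast; rw [← hl]
    exact_mod_cast this
  have hνge : (gam y).toReal + φ y ≤ ν φ := by
    have : (((gam y).toReal + φ y : ℝ) : EReal) ≤ (ν φ : EReal) := by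
      rw [hν φ]; push_cast; rw [← hgy]
      exact le_iSup (fun x => gam x + (φ x : EReal)) y
    exact_mod_cast this
  have h1 := hlamgam i x₀ ⟨hx₀Sμ, hiU⟩ y ⟨hySν, hyU⟩
  have h2 := hφosc i x₀ hiU y hyU
  rw [abs_lt] at h1 h2
  linarith

theorem stmt1 {X : Type*} [TopologicalSpace X] [CompactSpace X] [T2Space X]
    (lam gam : X → EReal)
    (hlamusc : UpperSemicontinuous lam) (hgamusc : UpperSemicontinuous gam)
    (hlamle : ∀ x, lam x ≤ 0) (hgamle : ∀ x, gam x ≤ 0)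
    (hlam0 : ∃ x, lam x = 0) (hgam0 : ∃ x, gam x = 0)
    (μ ν : C(X, ℝ) → ℝ)
    (hμ : ∀ φ : C(X, ℝ), (μ φ : EReal) = ⨆ x, lam x + (φ x : EReal))
    (hν : ∀ φ : C(X, ℝ), (ν φ : EReal) = ⨆ x, gam x + (φ x : EReal))
    (Sμ Sν : Set X) (hSμ : Sμ = {x | ⊥ < lam x}) (hSν : Sν = {x | ⊥ < gam x})
    (φ : C(X, ℝ)) (ε : ℝ) (hε : 0 < ε)
    (n : ℕ) (U : Fin n → Set X) (hUopen : ∀ i, IsOpen (U i))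
    (hcovμ : Sμ ⊆ ⋃ i, U i) (hcovν : Sν ⊆ ⋃ i, U i)
    (hmeetμ : ∀ i, (Sμ ∩ U i).Nonempty) (hmeetν : ∀ i, (Sν ∩ U i).Nonempty)
    (hφosc : ∀ i, ∀ u ∈ U i, ∀ v ∈ U i, |φ u - φ v| < ε / 2)
    (hlamgam : ∀ i, ∀ x ∈ Sμ ∩ U i, ∀ y ∈ Sν ∩ U i,
      |(lam x).toReal - (gam y).toReal| < ε / 2) :
    |μ φ - ν φ| < ε := by
  rw [abs_lt]
  constructor
  · have := key_lemma gam lam hgamusc hgamle hlamle hgam0 ν μ hν hμ Sν Sμ hSν hSμ φ ε n U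
      hcovν hmeetμ hφosc (fun i x hx y hy => by
        rw [abs_sub_comm]; exact hlamgam i y hy x hx)
    linarith
  · exact sub_lt_iff_lt_add.2 (by
      have := key_lemma lam gam hlamusc hlamle hgamle hlam0 μ ν hμ hν Sμ Sν hSμ hSν φ ε n U
        hcovμ hmeetν hφosc hlamgam
      linarith)
end
end

section
/- Let X be a compact Hausdorff space, let λ₁, λ₂ : X → [-∞, 0] be upper semicontinuous functions and x₁₀, x₂₀ ∈ X points with λ₁(x₁₀) = 0 and λ₂(x₂₀) = 0, and let μ₁, μ₂ : C(X) → ℝ be defined by μᵢ(φ) = sup_{x ∈ X}(λᵢ(x) + φ(x)) (with (-∞) + t = -∞). Then the functional ξ⁰ : C(X × X) → ℝ defined by ξ⁰(φ) = max( φ(x₁₀, x₂₀), sup_{x ∈ X}(λ₂(x) + φ(x₁₀, x)), sup_{x ∈ X}(λ₁(x) + φ(x, x₂₀)) ) is an idempotent probability measure on X × X, and it is (μ₁, μ₂)-admissible. -/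
noncomputable section

/-!
`ξ⁰` is the pointwise maximum of the evaluation at `(x₁₀, x₂₀)` and of two max-plus integrals
`φ ↦ ⨆ i, λ i + φ (g i)` whose densities have supremum `0`. Each of these satisfies the axioms of an
idempotent probability measure as an `EReal`-valued functional, and the axioms survive pointwise
maxima. For the first marginal, the `λ₂`-term collapses to the constant `φ x₁₀`, which is
dominated by `μ₁ φ` because `λ₁ x₁₀ = 0`; symmetrically for the second.
-/

open ContinuousMap

theorem EReal.coe_add_iSup {ι : Sort*} (c : ℝ) (g : ι → EReal) :
    (c : EReal) + ⨆ i, g i = ⨆ i, ((c : EReal) + g i) := by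
  have hcont : Continuous fun x : EReal => (c : EReal) + x :=
    continuous_iff_continuousAt.2 fun x =>
      (EReal.continuousAt_add (Or.inl (EReal.coe_ne_top c)) (Or.inl (EReal.coe_ne_bot c))).comp
        (continuous_const.prodMk continuous_id).continuousAt
  exact Monotone.map_iSup_of_continuousAt hcont.continuousAt (fun _ _ h => add_le_add_right h _)
    (EReal.add_bot _)

section MaxPlus

variable {ι Y : Type*} [TopologicalSpace Y]

/-- The `EReal`-valued analogue of `IsIPM`, where `⨆ x, λ x + φ x` lives before it is known
to be finite. -/
def IsERealIPM (F : C(Y, ℝ) → EReal) : Prop :=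
  (∀ c : ℝ, F (const Y c) = c) ∧
  (∀ (c : ℝ) (φ : C(Y, ℝ)), F (const Y c + φ) = c + F φ) ∧
  (∀ φ ψ : C(Y, ℝ), F (φ ⊔ ψ) = max (F φ) (F ψ))

theorem IsERealIPM.isIPM {F : C(Y, ℝ) → EReal} {ν : C(Y, ℝ) → ℝ} (hF : IsERealIPM F)
    (hν : ∀ φ, (ν φ : EReal) = F φ) : IsIPM ν := by
  obtain ⟨hconst, hadd, hmax⟩ := hF
  refine ⟨fun c => ?_, fun c φ => ?_, fun φ ψ => ?_⟩ <;> apply EReal.coe_injective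
  · rw [hν, hconst]
  · rw [hν, hadd, ← hν, EReal.coe_add]
  · rw [hν, hmax, ← hν, ← hν, EReal.coe_strictMono.monotone.map_max]

theorem IsERealIPM.max {F G : C(Y, ℝ) → EReal} (hF : IsERealIPM F) (hG : IsERealIPM G) :
    IsERealIPM fun φ => max (F φ) (G φ) := by
  obtain ⟨hFconst, hFadd, hFmax⟩ := hF
  obtain ⟨hGconst, hGadd, hGmax⟩ := hG
  refine ⟨fun c => ?_, fun c φ => ?_, fun φ ψ => ?_⟩ <;> dsimp only
  · rw [hFconst, hGconst, max_self]
  · rw [hFadd, hGadd, max_add_add_left]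
  · rw [hFmax, hGmax, max_max_max_comm]

theorem isERealIPM_eval (y : Y) : IsERealIPM fun φ : C(Y, ℝ) => (φ y : EReal) :=
  ⟨fun _ => rfl, fun _ _ => EReal.coe_add _ _, fun _ _ => EReal.coe_strictMono.monotone.map_max⟩

section Density

variable {lam : ι → EReal} (hle : ∀ i, lam i ≤ 0) {i₀ : ι} (h0 : lam i₀ = 0)
include h0

theorem EReal.coe_le_iSup_add (t : ι → ℝ) : (t i₀ : EReal) ≤ ⨆ i, lam i + (t i : EReal) :=
  le_iSup_of_le i₀ (by rw [h0, zero_add])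

include hle

theorem EReal.iSup_eq_zero_of_le_zero : ⨆ i, lam i = 0 :=
  le_antisymm (iSup_le hle) (h0 ▸ le_iSup lam i₀)

theorem EReal.iSup_add_coe_const (c : ℝ) : ⨆ i, lam i + (c : EReal) = c := by
  simp_rw [add_comm _ (c : EReal), ← EReal.coe_add_iSup, EReal.iSup_eq_zero_of_le_zero hle h0,
    add_zero]

theorem isERealIPM_iSup_add (g : ι → Y) :
    IsERealIPM fun φ : C(Y, ℝ) => ⨆ i, lam i + (φ (g i) : EReal) := by
  refine ⟨fun c => EReal.iSup_add_coe_const hle h0 c, fun c φ => ?_, fun φ ψ => ?_⟩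
  · simp_rw [ContinuousMap.add_apply, const_apply, EReal.coe_add, add_left_comm (lam _),
      EReal.coe_add_iSup]
  · simp_rw [sup_apply, EReal.coe_strictMono.monotone.map_max, ← max_add_add_left]
    exact iSup_sup_eq

end Density

end MaxPlus

theorem stmt4_general {X : Type*} [TopologicalSpace X]
    (lam₁ lam₂ : X → EReal)
    (h₁le : ∀ x, lam₁ x ≤ 0) (h₂le : ∀ x, lam₂ x ≤ 0)
    (x₁₀ x₂₀ : X) (h₁0 : lam₁ x₁₀ = 0) (h₂0 : lam₂ x₂₀ = 0)
    (μ₁ μ₂ : C(X, ℝ) → ℝ)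
    (hμ₁ : ∀ φ : C(X, ℝ), (μ₁ φ : EReal) = ⨆ x, lam₁ x + (φ x : EReal))
    (hμ₂ : ∀ φ : C(X, ℝ), (μ₂ φ : EReal) = ⨆ x, lam₂ x + (φ x : EReal))
    (ξ₀ : C(X × X, ℝ) → ℝ)
    (hξ₀ : ∀ φ : C(X × X, ℝ), (ξ₀ φ : EReal) =
      max (φ (x₁₀, x₂₀) : EReal)
        (max (⨆ x, lam₂ x + (φ (x₁₀, x) : EReal))
             (⨆ x, lam₁ x + (φ (x, x₂₀) : EReal)))) :
    IsIPM ξ₀ ∧ IsAdmissible μ₁ μ₂ ξ₀ := by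
  have hIPM : IsIPM ξ₀ :=
    ((isERealIPM_eval (x₁₀, x₂₀)).max ((isERealIPM_iSup_add h₂le h₂0 (x₁₀, ·)).max
      (isERealIPM_iSup_add h₁le h₁0 (·, x₂₀)))).isIPM hξ₀
  refine ⟨hIPM, hIPM, fun φ => EReal.coe_injective ?_, fun φ => EReal.coe_injective ?_⟩
  · rw [hξ₀, hμ₁]
    simp only [comp_apply, coe_mk, EReal.iSup_add_coe_const h₂le h₂0]
    rw [← max_assoc, max_self, max_eq_right (EReal.coe_le_iSup_add h₁0 φ)]
  · rw [hξ₀, hμ₂]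
    simp only [comp_apply, coe_mk, EReal.iSup_add_coe_const h₁le h₁0]
    rw [max_comm (⨆ x, _), ← max_assoc, max_self, max_eq_right (EReal.coe_le_iSup_add h₂0 φ)]

theorem stmt4 {X : Type*} [TopologicalSpace X] [CompactSpace X] [T2Space X]
    (lam₁ lam₂ : X → EReal)
    (h₁usc : UpperSemicontinuous lam₁) (h₂usc : UpperSemicontinuous lam₂)
    (h₁le : ∀ x, lam₁ x ≤ 0) (h₂le : ∀ x, lam₂ x ≤ 0)
    (x₁₀ x₂₀ : X) (h₁0 : lam₁ x₁₀ = 0) (h₂0 : lam₂ x₂₀ = 0)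
    (μ₁ μ₂ : C(X, ℝ) → ℝ)
    (hμ₁ : ∀ φ : C(X, ℝ), (μ₁ φ : EReal) = ⨆ x, lam₁ x + (φ x : EReal))
    (hμ₂ : ∀ φ : C(X, ℝ), (μ₂ φ : EReal) = ⨆ x, lam₂ x + (φ x : EReal))
    (ξ₀ : C(X × X, ℝ) → ℝ)
    (hξ₀ : ∀ φ : C(X × X, ℝ), (ξ₀ φ : EReal) =
      max (φ (x₁₀, x₂₀) : EReal)
        (max (⨆ x, lam₂ x + (φ (x₁₀, x) : EReal))
             (⨆ x, lam₁ x + (φ (x, x₂₀) : EReal)))) :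
    IsIPM ξ₀ ∧ IsAdmissible μ₁ μ₂ ξ₀ :=
  stmt4_general lam₁ lam₂ h₁le h₂le x₁₀ x₂₀ h₁0 h₂0 μ₁ μ₂ hμ₁ hμ₂ ξ₀ hξ₀
end
end

section
/- For every pair μ₁, μ₂ of idempotent probability measures on a compact Hausdorff space X, there exists a (μ₁, μ₂)-admissible idempotent probability measure ξ on X × X; that is, the set Λ(μ₁, μ₂) is nonempty. -/
noncomputable section

/-!
The product measure `ξ φ = μ₁ (x ↦ μ₂ (φ (x, ·)))` is admissible. The only analytic point
is that the inner function is continuous: an idempotent probability measure is monotone and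
commutes with adding constants, hence is `1`-Lipschitz for the sup distance, and `x ↦ φ (x, ·)`
is continuous into `C(X, ℝ)` because `X` is compact.
-/

namespace IsIPM

variable {Z : Type*} [TopologicalSpace Z] {μ : C(Z, ℝ) → ℝ}

theorem monotone (h : IsIPM μ) : Monotone μ := fun f g hfg => by
  rw [← sup_eq_right.mpr hfg, h.2.2]
  exact le_max_left _ _

theorem lipschitzWith [CompactSpace Z] (h : IsIPM μ) : LipschitzWith 1 μ := by
  refine LipschitzWith.of_le_add fun f g => ?_
  have hle : f ≤ ContinuousMap.const Z (dist f g) + g := fun z => by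
    have := (le_abs_self _).trans ((Real.dist_eq (f z) (g z)).symm.le.trans
      (ContinuousMap.dist_apply_le_dist z))
    change f z ≤ dist f g + g z
    linarith
  calc μ f ≤ μ (ContinuousMap.const Z (dist f g) + g) := h.monotone hle
    _ = μ g + dist f g := by rw [h.2.1, add_comm]

variable {X : Type*} [TopologicalSpace X] [CompactSpace Z]

def fiberMap (h : IsIPM μ) (φ : C(X × Z, ℝ)) : C(X, ℝ) :=
  ⟨fun x => μ (φ.curry x), h.lipschitzWith.continuous.comp φ.curry.continuous⟩

variable (h : IsIPM μ)
include h

theorem fiberMap_const (c : ℝ) :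
    h.fiberMap (ContinuousMap.const (X × Z) c) = ContinuousMap.const X c := by
  ext x
  exact h.1 c

theorem fiberMap_const_add (c : ℝ) (φ : C(X × Z, ℝ)) :
    h.fiberMap (ContinuousMap.const (X × Z) c + φ) = ContinuousMap.const X c + h.fiberMap φ := by
  ext x
  exact h.2.1 c (φ.curry x)

theorem fiberMap_sup (φ ψ : C(X × Z, ℝ)) :
    h.fiberMap (φ ⊔ ψ) = h.fiberMap φ ⊔ h.fiberMap ψ := by
  ext x
  exact h.2.2 (φ.curry x) (ψ.curry x)

theorem fiberMap_comp_fst (φ : C(X, ℝ)) :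
    h.fiberMap (φ.comp ⟨Prod.fst, continuous_fst⟩) = φ := by
  ext x
  exact h.1 (φ x)

theorem fiberMap_comp_snd (φ : C(Z, ℝ)) :
    h.fiberMap (φ.comp (⟨Prod.snd, continuous_snd⟩ : C(X × Z, Z))) =
      ContinuousMap.const X (μ φ) := by
  ext x
  rfl

end IsIPM

theorem stmt5_general {X : Type*} [TopologicalSpace X] [CompactSpace X]
    (μ₁ μ₂ : C(X, ℝ) → ℝ) (h₁ : IsIPM μ₁) (h₂ : IsIPM μ₂) :
    ∃ ξ : C(X × X, ℝ) → ℝ, IsAdmissible μ₁ μ₂ ξ := by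
  refine ⟨fun φ => μ₁ (h₂.fiberMap φ), ⟨fun c => ?_, fun c φ => ?_, fun φ ψ => ?_⟩,
    fun φ => ?_, fun φ => ?_⟩
  · simp only [h₂.fiberMap_const, h₁.1]
  · simp only [h₂.fiberMap_const_add, h₁.2.1]
  · simp only [h₂.fiberMap_sup, h₁.2.2]
  · simp only [h₂.fiberMap_comp_fst]
  · simp only [h₂.fiberMap_comp_snd, h₁.1]

theorem stmt5 {X : Type*} [TopologicalSpace X] [CompactSpace X] [T2Space X]
    (μ₁ μ₂ : C(X, ℝ) → ℝ) (h₁ : IsIPM μ₁) (h₂ : IsIPM μ₂) :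
    ∃ ξ : C(X × X, ℝ) → ℝ, IsAdmissible μ₁ μ₂ ξ :=
  stmt5_general μ₁ μ₂ h₁ h₂
end
end

section
/- Let X be a compact Hausdorff space, μ₁, μ₂ idempotent probability measures on X, and ξ a (μ₁, μ₂)-admissible idempotent probability measure on X × X. Then for every x ∈ X, d_{μ₁}(x) = sup_{y ∈ X} d_ξ(x, y), and for every y ∈ X, d_{μ₂}(y) = sup_{x ∈ X} d_ξ(x, y), where d denotes the density of the corresponding measure. -/
noncomputable section

lemma ipm_mono {Z : Type*} [TopologicalSpace Z] {ξ : C(Z,ℝ) → ℝ} (hξ : IsIPM ξ)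
    {φ ψ : C(Z,ℝ)} (h : φ ≤ ψ) : ξ φ ≤ ξ ψ := by
  have h2 := hξ.2.2 φ ψ
  rw [sup_eq_right.mpr h] at h2
  rw [h2]; exact le_max_left _ _

lemma ipm_zero {Z : Type*} [TopologicalSpace Z] {ξ : C(Z,ℝ) → ℝ} (hξ : IsIPM ξ) : ξ 0 = 0 := by
  rw [show (0 : C(Z,ℝ)) = ContinuousMap.const Z 0 from by ext z; simp]
  exact hξ.1 0

lemma density_le_zero {Z : Type*} [TopologicalSpace Z] {ξ : C(Z,ℝ) → ℝ} (hξ : IsIPM ξ)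
    (z : Z) : idemDensity ξ z ≤ 0 := by
  apply sInf_le
  exact ⟨0, le_refl _, rfl, by rw [ipm_zero hξ]; simp⟩

lemma aux {X Z : Type*} [TopologicalSpace X] [CompactSpace X] [T2Space X]
    [TopologicalSpace Z] [CompactSpace Z] [T2Space Z]
    (ξ : C(Z, ℝ) → ℝ) (hξ : IsIPM ξ) (μ : C(X, ℝ) → ℝ)
    (π : C(Z, X)) (hπ : ∀ φ : C(X,ℝ), ξ (φ.comp π) = μ φ)
    {Y : Type*} [Nonempty Y] (f : Y → Z) (x : X)
    (hf : ∀ y, π (f y) = x) (hsurj : ∀ z, π z = x → ∃ y, f y = z) :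
    idemDensity μ x = ⨆ y, idemDensity ξ (f y) := by
  apply le_antisymm
  · -- hard direction
    by_contra hcon
    push_neg at hcon
    set M := ⨆ y, idemDensity ξ (f y) with hM
    set d := idemDensity μ x with hd
    have hd0 : d ≤ 0 := by
      apply sInf_le
      refine ⟨0, le_refl _, rfl, ?_⟩
      rw [← hπ 0]
      have : (0 : C(X,ℝ)).comp π = 0 := by ext z; simp
      rw [this, ipm_zero hξ]; simp
    obtain ⟨z1, hz1, hz1'⟩ := exists_between hcon
    have hz1top : z1 ≠ ⊤ := ne_top_of_lt (hz1'.trans_le hd0)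
    have hz1bot : z1 ≠ ⊥ := (lt_of_le_of_lt bot_le hz1).ne'
    set r : ℝ := z1.toReal with hr
    have hrz : (r : EReal) = z1 := EReal.coe_toReal hz1top hz1bot
    obtain ⟨z2, hz2, hz2'⟩ := exists_between hz1
    have hz2top' : z2 ≠ ⊤ := ne_top_of_lt hz2'
    have hz2bot : z2 ≠ ⊥ := (lt_of_le_of_lt bot_le hz2).ne'
    set r' : ℝ := z2.toReal with hr'
    have hr'z : (r' : EReal) = z2 := EReal.coe_toReal hz2top' hz2bot
    have hr'r : r' < r := by
      rw [← EReal.coe_lt_coe_iff, hrz, hr'z]; exact hz2'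
    set ε : ℝ := r - r' with hε
    have hεpos : 0 < ε := by simp [hε]; linarith
    -- for each y, get ψ_y
    have hψ : ∀ y : Y, ∃ ψ : C(Z,ℝ), ψ ≤ 0 ∧ ψ (f y) = 0 ∧ ξ ψ < r' := by
      intro y
      have h1 : idemDensity ξ (f y) < (r' : EReal) := by
        rw [hr'z]
        exact lt_of_le_of_lt (le_iSup (fun y => idemDensity ξ (f y)) y) hz2
      rw [idemDensity, sInf_lt_iff] at h1
      obtain ⟨a, ⟨ψ, h1, h2, h3⟩, h4⟩ := h1
      rw [h3, EReal.coe_lt_coe_iff] at h4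
      exact ⟨ψ, h1, h2, h4⟩
    choose ψ hψ0 hψz hψξ using hψ
    -- finite subcover of the fiber
    set F : Set Z := π ⁻¹' {x} with hF
    have hFc : IsCompact F := (IsClosed.preimage π.continuous isClosed_singleton).isCompact
    have hcov : F ⊆ ⋃ y, {z | -ε < ψ y z} := by
      intro z hz
      obtain ⟨y, rfl⟩ := hsurj z hz
      exact Set.mem_iUnion.mpr ⟨y, by simp [hψz y]; linarith⟩
    obtain ⟨t, ht⟩ := hFc.elim_finite_subcover (fun y => {z | -ε < ψ y z})
      (fun y => isOpen_lt continuous_const (ψ y).continuous) hcov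
    have htne : t.Nonempty := by
      rcases Finset.eq_empty_or_nonempty t with h | h
      · exfalso
        have : f (Classical.arbitrary Y) ∈ F := by simp [hF, hf]
        have := ht this
        simp [h] at this
      · exact h
    set Ψ : C(Z,ℝ) := t.sup' htne ψ with hΨ
    have hΨapp : ∀ z, Ψ z = t.sup' htne fun y => ψ y z := by
      intro z
      exact ContinuousMap.sup'_apply htne ψ z
    have hΨ0 : Ψ ≤ 0 := by
      rw [ContinuousMap.le_def]
      intro z
      rw [hΨapp]
      simp only [ContinuousMap.zero_apply]
      exact Finset.sup'_le _ _ fun y _ => hψ0 y z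
    have hΨξ : ξ Ψ < r' := by
      have : ξ Ψ = t.sup' htne fun y => ξ (ψ y) :=
        map_finset_sup' (⟨ξ, hξ.2.2⟩ : SupHom C(Z,ℝ) ℝ) htne ψ
      rw [this, Finset.sup'_lt_iff]
      exact fun y _ => hψξ y
    have hΨF : ∀ z ∈ F, -ε < Ψ z := by
      intro z hz
      obtain ⟨y, hyt, hy⟩ := Set.mem_iUnion₂.mp (ht hz)
      calc -ε < ψ y z := hy
        _ ≤ Ψ z := by rw [hΨapp]; exact Finset.le_sup' (fun y => ψ y z) hyt
    -- lower bound for Ψ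
    have hne : Nonempty Z := ⟨f (Classical.arbitrary Y)⟩
    obtain ⟨z0, -, hz0'⟩ := isCompact_univ.exists_isMinOn Set.univ_nonempty
      Ψ.continuous.continuousOn
    have hz0 : ∀ z, Ψ z0 ≤ Ψ z := fun z => hz0' (Set.mem_univ z)
    set C : ℝ := max ε (-(Ψ z0)) with hC
    have hCε : ε ≤ C := le_max_left _ _
    have hΨC : ∀ z, -C ≤ Ψ z := by
      intro z
      have h1 : -(Ψ z0) ≤ C := le_max_right _ _
      linarith [hz0 z]
    -- Urysohn
    set K : Set X := π '' {z | Ψ z ≤ -ε} with hK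
    have hKc : IsClosed K :=
      (((isClosed_le Ψ.continuous continuous_const).isCompact).image π.continuous).isClosed
    have hxK : x ∉ K := by
      rintro ⟨z, hz, hzx⟩
      have hzF : z ∈ F := by simp [hF, hzx]
      exact absurd (hΨF z hzF) (not_lt.mpr hz)
    obtain ⟨g, hg0, hg1, hg01⟩ := exists_continuous_zero_one_of_isClosed hKc
      isClosed_singleton (Set.disjoint_singleton_right.mpr hxK)
    set φ : C(X,ℝ) := C • g - ContinuousMap.const X C with hφ
    have hφ0 : φ ≤ 0 := by
      rw [ContinuousMap.le_def]
      intro a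
      have h01 := hg01 a
      simp [hφ]
      nlinarith [h01.1, h01.2, hCε, hεpos]
    have hφx : φ x = 0 := by
      have : g x = 1 := hg1 rfl
      simp [hφ, this]
    have hle : φ.comp π ≤ ContinuousMap.const Z ε + Ψ := by
      rw [ContinuousMap.le_def]
      intro z
      simp only [ContinuousMap.comp_apply, ContinuousMap.add_apply,
        ContinuousMap.const_apply]
      by_cases hc : Ψ z ≤ -ε
      · have hπz : π z ∈ K := ⟨z, hc, rfl⟩
        have : g (π z) = 0 := hg0 hπz
        simp [hφ, this]
        linarith [hΨC z, hεpos.le]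
      · push_neg at hc
        have : φ (π z) ≤ 0 := hφ0 (π z)
        linarith
    have hμφ : μ φ < r := by
      have h1 : ξ (φ.comp π) ≤ ξ (ContinuousMap.const Z ε + Ψ) := ipm_mono hξ hle
      rw [hξ.2.1 ε Ψ] at h1
      rw [← hπ φ]
      calc ξ (φ.comp π) ≤ ε + ξ Ψ := h1
        _ < ε + r' := by linarith
        _ = r := by rw [hε]; ring
    have hdle : d ≤ (μ φ : EReal) := sInf_le ⟨φ, hφ0, hφx, rfl⟩
    have : d < d := by
      calc d ≤ (μ φ : EReal) := hdle
        _ < (r : EReal) := EReal.coe_lt_coe_iff.mpr hμφ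
        _ = z1 := hrz
        _ < d := hz1'
    exact absurd this (lt_irrefl d)
  · apply iSup_le
    intro y
    apply sInf_le_sInf
    rintro a ⟨φ, h1, h2, h3⟩
    refine ⟨φ.comp π, ?_, ?_, ?_⟩
    · intro z; exact h1 (π z)
    · simp [hf y, h2]
    · rw [h3, hπ]

theorem stmt6 {X : Type*} [TopologicalSpace X] [CompactSpace X] [T2Space X]
    (μ₁ μ₂ : C(X, ℝ) → ℝ) (h₁ : IsIPM μ₁) (h₂ : IsIPM μ₂)
    (ξ : C(X × X, ℝ) → ℝ) (hξ : IsAdmissible μ₁ μ₂ ξ) :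
    (∀ x : X, idemDensity μ₁ x = ⨆ y : X, idemDensity ξ (x, y)) ∧
    (∀ y : X, idemDensity μ₂ y = ⨆ x : X, idemDensity ξ (x, y)) := by
  obtain ⟨hξipm, hπ1, hπ2⟩ := hξ
  constructor
  · intro x
    haveI : Nonempty X := ⟨x⟩
    exact aux ξ hξipm μ₁ ⟨Prod.fst, continuous_fst⟩ hπ1 (fun y => (x, y)) x
      (fun y => rfl) (fun z hz => ⟨z.2, by cases z; simp_all⟩)
  · intro y
    haveI : Nonempty X := ⟨y⟩
    exact aux ξ hξipm μ₂ ⟨Prod.snd, continuous_snd⟩ hπ2 (fun a => (a, y)) y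
      (fun a => rfl) (fun z hz => ⟨z.1, by cases z; simp_all⟩)
end
end

section
/- Let (X, ρ) be a compact metric space and μ₁, μ₂ idempotent probability measures on X. Then there exists a (μ₁, μ₂)-admissible idempotent probability measure ξ on X × X attaining the infimum: ξ(ρ) = d_I(μ₁, μ₂). -/
noncomputable section

lemma IsIPM.mono {Z : Type*} [TopologicalSpace Z] {μ : C(Z, ℝ) → ℝ} (h : IsIPM μ)
    {φ ψ : C(Z, ℝ)} (hle : φ ≤ ψ) : μ φ ≤ μ ψ := by
  have h3 := h.2.2 φ ψ
  rw [sup_eq_right.mpr hle] at h3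
  rw [h3]
  exact le_max_left _ _

lemma IsIPM.mem_Icc {Z : Type*} [TopologicalSpace Z] [CompactSpace Z] {μ : C(Z, ℝ) → ℝ} (h : IsIPM μ)
    (φ : C(Z, ℝ)) : μ φ ∈ Set.Icc (-‖φ‖) ‖φ‖ := by
  constructor
  · have hle : ContinuousMap.const Z (-‖φ‖) ≤ φ := fun z =>
      (abs_le.mp (φ.norm_coe_le_norm z)).1
    have := h.mono hle
    rwa [h.1] at this
  · have hle : φ ≤ ContinuousMap.const Z ‖φ‖ := fun z =>
      (abs_le.mp (φ.norm_coe_le_norm z)).2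
    have := h.mono hle
    rwa [h.1] at this

lemma IsIPM.continuous {Z : Type*} [TopologicalSpace Z] [CompactSpace Z]
    {μ : C(Z, ℝ) → ℝ} (h : IsIPM μ) : Continuous μ := by
  have key : ∀ f g : C(Z, ℝ), μ f - μ g ≤ dist f g := by
    intro f g
    have hle : f ≤ ContinuousMap.const Z (dist f g) + g := by
      intro z
      have h1 : dist (f z) (g z) ≤ dist f g := ContinuousMap.dist_apply_le_dist z
      have h2 : f z - g z ≤ dist (f z) (g z) := by
        rw [Real.dist_eq]; exact le_abs_self _
      simp only [ContinuousMap.toFun_eq_coe, ContinuousMap.add_apply,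
        ContinuousMap.const_apply]
      linarith
    have := h.mono hle
    rw [h.2.1] at this
    linarith
  have : LipschitzWith 1 μ := by
    apply LipschitzWith.of_dist_le_mul
    intro f g
    rw [NNReal.coe_one, one_mul, Real.dist_eq, abs_sub_le_iff]
    exact ⟨key f g, by simpa [dist_comm] using key g f⟩
  exact this.continuous

theorem stmt7 {X : Type*} [MetricSpace X] [CompactSpace X]
    (μ₁ μ₂ : C(X, ℝ) → ℝ) (h₁ : IsIPM μ₁) (h₂ : IsIPM μ₂) :
    ∃ ξ : C(X × X, ℝ) → ℝ, IsAdmissible μ₁ μ₂ ξ ∧ ξ (rhoFun X) = dI μ₁ μ₂ := by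
  -- the product measure, to show nonemptiness
  set μ₂c : C(C(X, ℝ), ℝ) := ⟨μ₂, h₂.continuous⟩ with hμ₂c
  set P : C(X × X, ℝ) → ℝ := fun φ => μ₁ (μ₂c.comp φ.curry) with hP
  have hPadm : IsAdmissible μ₁ μ₂ P := by
    refine ⟨⟨?_, ?_, ?_⟩, ?_, ?_⟩
    · intro c
      have : μ₂c.comp (ContinuousMap.const (X × X) c).curry = ContinuousMap.const X c := by
        ext x
        have hx : (ContinuousMap.const (X × X) c).curry x = ContinuousMap.const X c := by
          ext y; simp
        simp only [ContinuousMap.comp_apply, hx, ContinuousMap.const_apply, μ₂c,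
          ContinuousMap.coe_mk]
        exact h₂.1 c
      rw [hP]; simp only []
      rw [this, h₁.1]
    · intro c φ
      have : μ₂c.comp (ContinuousMap.const (X × X) c + φ).curry
          = ContinuousMap.const X c + μ₂c.comp φ.curry := by
        ext x
        have : (ContinuousMap.const (X × X) c + φ).curry x
            = ContinuousMap.const X c + φ.curry x := by
          ext y; simp
        simp only [ContinuousMap.comp_apply, this, ContinuousMap.add_apply,
          ContinuousMap.const_apply]
        exact h₂.2.1 c (φ.curry x)
      rw [hP]; simp only []
      rw [this, h₁.2.1]
    · intro φ ψ
      have : μ₂c.comp (φ ⊔ ψ).curry = (μ₂c.comp φ.curry) ⊔ (μ₂c.comp ψ.curry) := by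
        ext x
        have hx : (φ ⊔ ψ).curry x = φ.curry x ⊔ ψ.curry x := by
          ext y; simp
        simp only [ContinuousMap.comp_apply, hx, ContinuousMap.sup_apply]
        exact h₂.2.2 _ _
      rw [hP]; simp only []
      rw [this, h₁.2.2]
    · intro φ
      have : μ₂c.comp (φ.comp ⟨Prod.fst, continuous_fst⟩).curry = φ := by
        ext x
        have : (φ.comp ⟨Prod.fst, continuous_fst⟩).curry x = ContinuousMap.const X (φ x) := by
          ext y; simp
        simp only [ContinuousMap.comp_apply, this, μ₂c, ContinuousMap.coe_mk]
        exact h₂.1 _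
      rw [hP]; simp only []
      rw [this]
    · intro φ
      have : μ₂c.comp (φ.comp ⟨Prod.snd, continuous_snd⟩).curry
          = ContinuousMap.const X (μ₂ φ) := by
        ext x
        have : (φ.comp ⟨Prod.snd, continuous_snd⟩).curry x = φ := by
          ext y; simp
        simp only [ContinuousMap.comp_apply, this, μ₂c, ContinuousMap.coe_mk,
          ContinuousMap.const_apply]
      rw [hP]; simp only []
      rw [this, h₁.1]
  -- the set of admissible measures is compact
  set A : Set (C(X × X, ℝ) → ℝ) := {ξ | IsAdmissible μ₁ μ₂ ξ} with hA
  set T : Set (C(X × X, ℝ) → ℝ) :=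
    Set.pi Set.univ (fun φ : C(X × X, ℝ) => Set.Icc (-‖φ‖) ‖φ‖) with hT
  have hAT : A ⊆ T := fun ξ hξ φ _ => hξ.1.mem_Icc φ
  have hAclosed : IsClosed A := by
    have : A = (⋂ c : ℝ, {ξ : C(X × X, ℝ) → ℝ | ξ (ContinuousMap.const (X × X) c) = c}) ∩
        (⋂ c : ℝ, ⋂ φ : C(X × X, ℝ),
          {ξ | ξ (ContinuousMap.const (X × X) c + φ) = c + ξ φ}) ∩
        (⋂ φ : C(X × X, ℝ), ⋂ ψ : C(X × X, ℝ),
          {ξ | ξ (φ ⊔ ψ) = max (ξ φ) (ξ ψ)}) ∩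
        (⋂ φ : C(X, ℝ), {ξ | ξ (φ.comp ⟨Prod.fst, continuous_fst⟩) = μ₁ φ}) ∩
        (⋂ φ : C(X, ℝ), {ξ | ξ (φ.comp ⟨Prod.snd, continuous_snd⟩) = μ₂ φ}) := by
      ext ξ
      simp only [hA, Set.mem_setOf_eq, IsAdmissible, IsIPM, Set.mem_inter_iff,
        Set.mem_iInter, Set.mem_setOf_eq]
      tauto
    rw [this]
    refine IsClosed.inter (IsClosed.inter (IsClosed.inter (IsClosed.inter ?_ ?_) ?_) ?_) ?_
    · exact isClosed_iInter fun c => isClosed_eq (continuous_apply _) continuous_const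
    · exact isClosed_iInter fun c => isClosed_iInter fun φ =>
        isClosed_eq (continuous_apply _) (continuous_const.add (continuous_apply _))
    · exact isClosed_iInter fun φ => isClosed_iInter fun ψ =>
        isClosed_eq (continuous_apply _) (Continuous.max (continuous_apply φ) (continuous_apply ψ))
    · exact isClosed_iInter fun φ => isClosed_eq (continuous_apply _) continuous_const
    · exact isClosed_iInter fun φ => isClosed_eq (continuous_apply _) continuous_const
  have hTcompact : IsCompact T := isCompact_univ_pi fun φ => isCompact_Icc
  have hKcompact : IsCompact (T ∩ A) := hTcompact.inter_right hAclosed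
  have hKne : (T ∩ A).Nonempty := ⟨P, hAT hPadm, hPadm⟩
  obtain ⟨ξ₀, hξ₀K, hmin⟩ := hKcompact.exists_isMinOn hKne
    ((continuous_apply (rhoFun X)).continuousOn)
  have hξ₀adm : IsAdmissible μ₁ μ₂ ξ₀ := hξ₀K.2
  refine ⟨ξ₀, hξ₀adm, ?_⟩
  have hbdd : BddBelow {r : ℝ | ∃ ξ : C(X × X, ℝ) → ℝ,
      IsAdmissible μ₁ μ₂ ξ ∧ r = ξ (rhoFun X)} := by
    refine ⟨-‖rhoFun X‖, ?_⟩
    rintro r ⟨ξ, hξ, rfl⟩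
    exact (hξ.1.mem_Icc _).1
  have hne : {r : ℝ | ∃ ξ : C(X × X, ℝ) → ℝ,
      IsAdmissible μ₁ μ₂ ξ ∧ r = ξ (rhoFun X)}.Nonempty := ⟨P (rhoFun X), P, hPadm, rfl⟩
  refine le_antisymm ?_ ?_
  · exact le_csInf hne (by rintro r ⟨ξ, hξ, rfl⟩; exact hmin ⟨hAT hξ, hξ⟩)
  · exact csInf_le hbdd ⟨ξ₀, hξ₀adm, rfl⟩
end
end

section
/- Let (X, ρ) be a compact metric space. The function ρ_I is a metric on the set of idempotent probability measures on X: for all idempotent probability measures μ₁, μ₂, μ₃ on X one has ρ_I(μ₁, μ₂) ≥ 0; ρ_I(μ₁, μ₂) = ρ_I(μ₂, μ₁); ρ_I(μ₁, μ₂) = 0 if and only if μ₁ = μ₂; and ρ_I(μ₁, μ₃) ≤ ρ_I(μ₁, μ₂) + ρ_I(μ₂, μ₃). -/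
noncomputable section

/-!
An idempotent probability measure is recovered from its density: `μ φ = sup (d_μ z + φ z)` over
`z ∈ supp μ`, and conversely `φ ↦ sup_i (w i + φ (π i))` is one whenever `sup w = 0`. The density
of a push-forward is the supremum of the densities over the fibre, so the marginals of such
measures are computed fibrewise, and admissible measures can be written down directly. The
product `d_{μ₁}(x) + d_{μ₂}(y)` shows that `ρ_I` is an infimum over a nonempty set; the diagonal
push-forward of `μ` gives `ρ_I(μ, μ) = 0`, and swapping coordinates gives symmetry. Gluing
`(μ₁, μ₂)`- and `(μ₂, μ₃)`-admissible measures with density `d₁₂(x, y) + d₂₃(y, z) - d_{μ₂}(y)`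
yields a `(μ₁, μ₃)`-admissible measure supported in `{ρ ≤ r₁₂ + r₂₃}`, which is the triangle
inequality. Finally, if `ρ_I(μ₁, μ₂) = 0` there are admissible measures supported arbitrarily
close to the diagonal, and comparing `φ ∘ π₁` with `φ ∘ π₂` on the support of such a measure
shows `μ₁ φ = μ₂ φ` for uniformly continuous `φ`.
-/

open Set

section IdempotentMeasure

variable {Z : Type*} [TopologicalSpace Z] {μ : C(Z, ℝ) → ℝ}

namespace IsIPM

theorem map_zero (hμ : IsIPM μ) : μ 0 = 0 :=
  hμ.1 0

theorem map_add_const (hμ : IsIPM μ) (φ : C(Z, ℝ)) (c : ℝ) :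
    μ (φ + ContinuousMap.const Z c) = μ φ + c := by
  rw [add_comm φ, hμ.2.1, add_comm]

theorem map_sub_const (hμ : IsIPM μ) (φ : C(Z, ℝ)) (c : ℝ) :
    μ (φ - ContinuousMap.const Z c) = μ φ - c := by
  have h := hμ.map_add_const (φ - ContinuousMap.const Z c) c
  rw [sub_add_cancel] at h
  linarith

theorem mono_s10 (hμ : IsIPM μ) {φ ψ : C(Z, ℝ)} (h : φ ≤ ψ) : μ φ ≤ μ ψ := by
  rw [← sup_eq_right.mpr h, hμ.2.2]
  exact le_max_left _ _

theorem map_finset_sup' (hμ : IsIPM μ) {ι : Type*} {t : Finset ι} (ht : t.Nonempty)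
    (f : ι → C(Z, ℝ)) : μ (t.sup' ht f) = t.sup' ht (fun i => μ (f i)) := by
  induction ht using Finset.Nonempty.cons_induction with
  | singleton a => simp
  | cons a s h hs ih => rw [Finset.sup'_cons hs, Finset.sup'_cons hs, hμ.2.2, ih]

theorem nonempty (hμ : IsIPM μ) : Nonempty Z := by
  by_contra hZ
  have h01 : ContinuousMap.const Z (0 : ℝ) = ContinuousMap.const Z 1 :=
    ContinuousMap.ext fun z => (hZ ⟨z⟩).elim
  have h := congrArg μ h01
  rw [hμ.1, hμ.1] at h
  exact zero_ne_one h

theorem map_comp {W : Type*} [TopologicalSpace W] (hμ : IsIPM μ) (f : C(Z, W)) :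
    IsIPM fun φ : C(W, ℝ) => μ (φ.comp f) :=
  ⟨fun c => hμ.1 c, fun c φ => hμ.2.1 c (φ.comp f), fun φ ψ => hμ.2.2 (φ.comp f) (ψ.comp f)⟩

theorem le_of_forall_exists_lt [CompactSpace Z] (hμ : IsIPM μ) {φ : C(Z, ℝ)} {c : ℝ}
    (h : ∀ z, ∃ θ : C(Z, ℝ), μ θ ≤ c ∧ φ z < θ z) : μ φ ≤ c := by
  choose θ hθc hθ using h
  obtain ⟨t, ht⟩ := isCompact_univ.elim_finite_subcover (fun z => {w | φ w < θ z w})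
    (fun z => isOpen_lt φ.continuous (θ z).continuous)
    (fun z _ => mem_iUnion.mpr ⟨z, hθ z⟩)
  have hcover : ∀ w, ∃ z ∈ t, φ w < θ z w := fun w => by
    simpa using ht (mem_univ w)
  have htne : t.Nonempty := by
    obtain ⟨z, hz, -⟩ := hcover hμ.nonempty.some
    exact ⟨z, hz⟩
  calc μ φ ≤ μ (t.sup' htne θ) := hμ.mono_s10 fun w => by
        obtain ⟨z, hz, hw⟩ := hcover w
        show φ w ≤ t.sup' htne θ w
        rw [ContinuousMap.sup'_apply]
        exact hw.le.trans (Finset.le_sup' (fun z => θ z w) hz)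
    _ ≤ c := by
        rw [hμ.map_finset_sup']
        exact Finset.sup'_le _ _ fun z _ => hθc z

end IsIPM

theorem idemDensity_le {z : Z} {ψ : C(Z, ℝ)} (hψ : ψ ≤ 0) (hψz : ψ z = 0) :
    idemDensity μ z ≤ μ ψ :=
  sInf_le ⟨ψ, hψ, hψz, rfl⟩

theorem exists_test_of_idemDensity_lt {z : Z} {c : ℝ} (h : idemDensity μ z < c) :
    ∃ ψ : C(Z, ℝ), ψ ≤ 0 ∧ ψ z = 0 ∧ μ ψ < c := by
  obtain ⟨_, ⟨ψ, hψ, hψz, rfl⟩, hlt⟩ := sInf_lt_iff.mp h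
  exact ⟨ψ, hψ, hψz, EReal.coe_lt_coe_iff.mp hlt⟩

namespace IsIPM

theorem idemDensity_le_sub (hμ : IsIPM μ) (φ : C(Z, ℝ)) (z : Z) :
    idemDensity μ z ≤ ((μ φ - φ z : ℝ) : EReal) := by
  have hψ : (φ - ContinuousMap.const Z (φ z)) ⊓ 0 ≤ 0 := inf_le_right
  refine (idemDensity_le hψ (by simp)).trans (EReal.coe_le_coe_iff.mpr ?_)
  have := hμ.mono_s10 (inf_le_left : (φ - ContinuousMap.const Z (φ z)) ⊓ 0 ≤ _)
  rwa [hμ.map_sub_const] at this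

theorem idemDensity_le_zero (hμ : IsIPM μ) (z : Z) : idemDensity μ z ≤ 0 := by
  simpa [hμ.map_zero] using hμ.idemDensity_le_sub 0 z

theorem idemDensity_ne_top (hμ : IsIPM μ) (z : Z) : idemDensity μ z ≠ ⊤ :=
  ne_top_of_le_ne_top EReal.zero_ne_top (hμ.idemDensity_le_zero z)

theorem isOpen_setOf_idemDensity_lt (hμ : IsIPM μ) (c : ℝ) :
    IsOpen {z | idemDensity μ z < c} := by
  refine isOpen_iff_forall_mem_open.mpr fun z hz => ?_
  obtain ⟨ψ, -, hψz, hψc⟩ := exists_test_of_idemDensity_lt hz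
  refine ⟨{w | μ ψ - c < ψ w}, fun w hw => ?_, isOpen_lt continuous_const ψ.continuous,
    by simpa [hψz] using hψc⟩
  have hw' : μ ψ - c < ψ w := hw
  exact (hμ.idemDensity_le_sub ψ w).trans_lt (EReal.coe_lt_coe_iff.mpr (by linarith))

theorem le_of_forall_idemDensity_lt [CompactSpace Z] (hμ : IsIPM μ) {φ : C(Z, ℝ)} {c : ℝ}
    (h : ∀ z, idemDensity μ z < ((c - φ z : ℝ) : EReal)) : μ φ ≤ c := by
  refine hμ.le_of_forall_exists_lt fun z => ?_
  obtain ⟨ψ, -, hψz, hψc⟩ := exists_test_of_idemDensity_lt (h z)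
  refine ⟨ψ + ContinuousMap.const Z (c - μ ψ), ?_, ?_⟩
  · rw [hμ.map_add_const]; linarith
  · simp only [ContinuousMap.add_apply, ContinuousMap.const_apply, hψz]
    linarith

end IsIPM

end IdempotentMeasure

section Support

variable {Z : Type*} [TopologicalSpace Z] {μ : C(Z, ℝ) → ℝ}

/-- Off `idemSupp μ`, where `d_μ = ⊥`, this is the junk value `0`. -/
def idemDensityReal (μ : C(Z, ℝ) → ℝ) (z : Z) : ℝ :=
  (idemDensity μ z).toReal

namespace IsIPM

theorem coe_idemDensityReal (hμ : IsIPM μ) {z : Z} (hz : z ∈ idemSupp μ) :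
    (idemDensityReal μ z : EReal) = idemDensity μ z :=
  EReal.coe_toReal (hμ.idemDensity_ne_top z) hz.ne'

theorem idemDensityReal_nonpos (hμ : IsIPM μ) (z : Z) : idemDensityReal μ z ≤ 0 :=
  EReal.toReal_nonpos (hμ.idemDensity_le_zero z)

theorem idemDensityReal_add_le (hμ : IsIPM μ) {z : Z} (hz : z ∈ idemSupp μ) (φ : C(Z, ℝ)) :
    idemDensityReal μ z + φ z ≤ μ φ := by
  have h := hμ.idemDensity_le_sub φ z
  rw [← hμ.coe_idemDensityReal hz, EReal.coe_le_coe_iff] at h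
  linarith

theorem idemDensity_lt_coe (hμ : IsIPM μ) {z : Z} {c : ℝ}
    (h : z ∈ idemSupp μ → idemDensityReal μ z < c) : idemDensity μ z < c := by
  by_cases hz : z ∈ idemSupp μ
  · rw [← hμ.coe_idemDensityReal hz, EReal.coe_lt_coe_iff]
    exact h hz
  · rw [le_bot_iff.mp (not_lt.mp (show ¬⊥ < idemDensity μ z from hz))]
    exact EReal.bot_lt_coe c

variable [CompactSpace Z]

theorem le_of_forall_mem_idemSupp (hμ : IsIPM μ) {φ : C(Z, ℝ)} {c : ℝ}
    (h : ∀ z ∈ idemSupp μ, idemDensityReal μ z + φ z ≤ c) : μ φ ≤ c := by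
  refine le_of_forall_pos_le_add fun ε hε => hμ.le_of_forall_idemDensity_lt fun z =>
    hμ.idemDensity_lt_coe fun hz => ?_
  linarith [h z hz]

theorem le_add_of_forall_mem_idemSupp (hμ : IsIPM μ) {φ ψ : C(Z, ℝ)} {c : ℝ}
    (h : ∀ z ∈ idemSupp μ, φ z ≤ ψ z + c) : μ φ ≤ μ ψ + c :=
  hμ.le_of_forall_mem_idemSupp fun z hz => by
    linarith [h z hz, hμ.idemDensityReal_add_le hz ψ]

theorem exists_mem_idemSupp_lt (hμ : IsIPM μ) {φ : C(Z, ℝ)} {c : ℝ} (h : c < μ φ) :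
    ∃ z ∈ idemSupp μ, c < idemDensityReal μ z + φ z := by
  by_contra! hle
  exact h.not_ge (hμ.le_of_forall_mem_idemSupp hle)

theorem exists_mem_idemSupp_neg_lt (hμ : IsIPM μ) {ε : ℝ} (hε : 0 < ε) :
    ∃ z ∈ idemSupp μ, -ε < idemDensityReal μ z := by
  simpa using hμ.exists_mem_idemSupp_lt (φ := 0) (c := -ε) (by rw [hμ.map_zero]; linarith)

theorem idemSupp_nonempty (hμ : IsIPM μ) : (idemSupp μ).Nonempty :=
  let ⟨z, hz, _⟩ := hμ.exists_mem_idemSupp_neg_lt one_pos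
  ⟨z, hz⟩

end IsIPM

theorem exists_test_eq_neg_on [NormalSpace Z] [T1Space Z] {K : Set Z} (hK : IsClosed K)
    {z : Z} (hz : z ∉ K) {M : ℝ} (hM : 0 ≤ M) :
    ∃ ψ : C(Z, ℝ), ψ ≤ 0 ∧ ψ z = 0 ∧ ∀ w ∈ K, ψ w = -M := by
  obtain ⟨f, hf0, hf1, hf01⟩ := exists_continuous_zero_one_of_isClosed isClosed_singleton hK
    (disjoint_singleton_left.mpr hz)
  refine ⟨-(M • f), fun w => ?_, by simp [hf0 rfl], fun w hw => by simp [hf1 hw]⟩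
  simpa using mul_nonneg hM (hf01 w).1

theorem idemSupp_subset_of_forall_le [NormalSpace Z] [T1Space Z] {K : Set Z} (hK : IsClosed K)
    (h : ∀ (φ : C(Z, ℝ)) (c : ℝ), (∀ z ∈ K, φ z ≤ c) → μ φ ≤ c) : idemSupp μ ⊆ K := by
  intro z hz
  by_contra hzK
  refine hz.ne' ((EReal.eq_bot_iff_forall_lt _).mpr fun y => ?_)
  obtain ⟨ψ, hψ, hψz, hψK⟩ := exists_test_eq_neg_on hK hzK (M := |y| + 1) (by positivity)
  refine (idemDensity_le hψ hψz).trans_lt (EReal.coe_lt_coe_iff.mpr ?_)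
  have := h ψ _ fun w hw => (hψK w hw).le
  linarith [neg_abs_le y]

end Support

section Pushforward

variable {Z W : Type*} [TopologicalSpace Z] [TopologicalSpace W]
  {μ : C(Z, ℝ) → ℝ} {ν : C(W, ℝ) → ℝ} {f : C(Z, W)}

theorem idemDensity_le_of_comp (hf : ∀ φ, μ (φ.comp f) = ν φ) (z : Z) :
    idemDensity μ z ≤ idemDensity ν (f z) :=
  le_sInf fun _ ⟨φ, hφ, hφz, hr⟩ => hr ▸ hf φ ▸ idemDensity_le (fun z' => hφ (f z')) hφz

theorem mem_idemSupp_of_comp (hf : ∀ φ, μ (φ.comp f) = ν φ) {z : Z} (hz : z ∈ idemSupp μ) :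
    f z ∈ idemSupp ν :=
  lt_of_lt_of_le hz (idemDensity_le_of_comp hf z)

theorem idemDensityReal_le_of_comp (hν : IsIPM ν) (hf : ∀ φ, μ (φ.comp f) = ν φ) {z : Z}
    (hz : z ∈ idemSupp μ) : idemDensityReal μ z ≤ idemDensityReal ν (f z) :=
  EReal.toReal_le_toReal (idemDensity_le_of_comp hf z) hz.ne' (hν.idemDensity_ne_top _)

variable [CompactSpace Z] [T4Space W]

/-- By upper semicontinuity of `d_μ` the fibre has a neighbourhood `U` where `d_μ < c`; an Urysohn
function that vanishes at `w` and is very negative on `f '' Uᶜ` is the test for `d_ν(w) ≤ c`. -/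
theorem IsIPM.idemDensity_le_of_forall_fiber (hμ : IsIPM μ) (hf : ∀ φ, μ (φ.comp f) = ν φ)
    {w : W} {c : ℝ} (h : ∀ z, f z = w → idemDensity μ z < c) : idemDensity ν w ≤ c := by
  set U := {z | idemDensity μ z < c}
  have hK : IsClosed (f '' Uᶜ) :=
    ((hμ.isOpen_setOf_idemDensity_lt c).isClosed_compl.isCompact.image f.continuous).isClosed
  have hw : w ∉ f '' Uᶜ := by
    rintro ⟨z, hzU, rfl⟩
    exact hzU (h z rfl)
  obtain ⟨ψ, hψ, hψw, hψK⟩ := exists_test_eq_neg_on hK hw (M := |c| + 1) (by positivity)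
  refine (idemDensity_le hψ hψw).trans (EReal.coe_le_coe_iff.mpr ?_)
  rw [← hf]
  refine hμ.le_of_forall_idemDensity_lt fun z => ?_
  by_cases hz : z ∈ U
  · have hψz : ψ (f z) ≤ 0 := hψ (f z)
    refine lt_of_lt_of_le hz (EReal.coe_le_coe_iff.mpr ?_)
    rw [ContinuousMap.comp_apply]
    linarith
  · rw [ContinuousMap.comp_apply, hψK _ ⟨z, hz, rfl⟩]
    refine (hμ.idemDensity_le_zero z).trans_lt (EReal.coe_pos.mpr ?_)
    linarith [neg_abs_le c]

theorem IsIPM.exists_mem_idemSupp_fiber (hμ : IsIPM μ) (hν : IsIPM ν)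
    (hf : ∀ φ, μ (φ.comp f) = ν φ) {w : W} (hw : w ∈ idemSupp ν) {ε : ℝ} (hε : 0 < ε) :
    ∃ z ∈ idemSupp μ, f z = w ∧ idemDensityReal ν w - ε < idemDensityReal μ z := by
  by_contra! h
  have hle := hμ.idemDensity_le_of_forall_fiber hf (c := idemDensityReal ν w - ε / 2)
    fun z hzw => hμ.idemDensity_lt_coe fun hz => by linarith [h z hz hzw]
  rw [← hν.coe_idemDensityReal hw, EReal.coe_le_coe_iff] at hle
  linarith

end Pushforward

section SupPlus

variable {ι Z : Type*} [TopologicalSpace Z] {w : ι → ℝ} {π : ι → Z}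

def supPlus (w : ι → ℝ) (π : ι → Z) (φ : C(Z, ℝ)) : ℝ :=
  ⨆ i, w i + φ (π i)

theorem supPlus_le (hw : ∀ i, w i ≤ 0) (hw_approx : ∀ ε > 0, ∃ i, -ε < w i) {φ : C(Z, ℝ)} {c : ℝ}
    (h : ∀ i, φ (π i) ≤ c) : supPlus w π φ ≤ c :=
  have : Nonempty ι := let ⟨i, _⟩ := hw_approx 1 one_pos; ⟨i⟩
  ciSup_le fun i => by linarith [hw i, h i]

variable [CompactSpace Z]

theorem bddAbove_range_weight_add (hw : ∀ i, w i ≤ 0) (φ : C(Z, ℝ)) :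
    BddAbove (range fun i => w i + φ (π i)) := by
  obtain ⟨M, hM⟩ := (isCompact_range φ.continuous).bddAbove
  exact ⟨M, by rintro _ ⟨i, rfl⟩; linarith [hw i, hM (mem_range_self (π i))]⟩

theorem isIPM_supPlus (hw : ∀ i, w i ≤ 0) (hw_approx : ∀ ε > 0, ∃ i, -ε < w i) :
    IsIPM (supPlus w π) := by
  have : Nonempty ι := let ⟨i, _⟩ := hw_approx 1 one_pos; ⟨i⟩
  have hbdd := bddAbove_range_weight_add (π := π) hw
  have hadd : ∀ c φ, supPlus w π (ContinuousMap.const Z c + φ) = c + supPlus w π φ := by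
    intro c φ
    rw [supPlus, supPlus, add_ciSup (hbdd φ)]
    congr 1 with i
    simp only [ContinuousMap.add_apply, ContinuousMap.const_apply]
    ring
  have hzero : supPlus w π 0 = 0 := by
    refine le_antisymm (ciSup_le fun i => by simpa using hw i)
      (le_of_forall_pos_lt_add fun ε hε => ?_)
    obtain ⟨i, hi⟩ := hw_approx ε hε
    have := le_ciSup (hbdd 0) i
    rw [← supPlus, ContinuousMap.zero_apply, add_zero] at this
    linarith
  refine ⟨fun c => ?_, hadd, fun φ ψ => ?_⟩
  · simpa [hzero] using hadd c 0
  · simp only [supPlus, ContinuousMap.sup_apply, add_max]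
    exact ciSup_sup_eq (hbdd φ) (hbdd ψ)

theorem IsIPM.supPlus_eq {μ : C(Z, ℝ) → ℝ} (hμ : IsIPM μ)
    (hle : ∀ i, π i ∈ idemSupp μ ∧ w i ≤ idemDensityReal μ (π i))
    (happrox : ∀ z ∈ idemSupp μ, ∀ ε > 0, ∃ i, π i = z ∧ idemDensityReal μ z - ε < w i) :
    supPlus w π = μ := by
  funext φ
  have hterm : ∀ i, w i + φ (π i) ≤ μ φ := fun i => by
    linarith [(hle i).2, hμ.idemDensityReal_add_le (hle i).1 φ]
  obtain ⟨z, hz⟩ := hμ.idemSupp_nonempty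
  have : Nonempty ι := let ⟨i, _⟩ := happrox z hz 1 one_pos; ⟨i⟩
  refine le_antisymm (ciSup_le hterm) (le_of_forall_lt fun c hc => ?_)
  obtain ⟨z, hz, hcz⟩ := hμ.exists_mem_idemSupp_lt hc
  obtain ⟨i, rfl, hi⟩ := happrox z hz _ (sub_pos.mpr hcz)
  have hbdd : BddAbove (range fun i => w i + φ (π i)) := ⟨μ φ, by rintro _ ⟨j, rfl⟩; exact hterm j⟩
  exact lt_of_lt_of_le (by linarith) (le_ciSup hbdd i)

end SupPlus

section Couplings

variable {X : Type*} [TopologicalSpace X] {μ₁ μ₂ μ₃ : C(X, ℝ) → ℝ} {ξ : C(X × X, ℝ) → ℝ}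

namespace IsAdmissible

theorem isIPM_left (h : IsAdmissible μ₁ μ₂ ξ) : IsIPM μ₁ :=
  funext h.2.1 ▸ h.1.map_comp _

theorem isIPM_right (h : IsAdmissible μ₁ μ₂ ξ) : IsIPM μ₂ :=
  funext h.2.2 ▸ h.1.map_comp _

theorem fst_mem_idemSupp (h : IsAdmissible μ₁ μ₂ ξ) {x y : X} (hxy : (x, y) ∈ idemSupp ξ) :
    x ∈ idemSupp μ₁ :=
  mem_idemSupp_of_comp h.2.1 hxy

theorem snd_mem_idemSupp (h : IsAdmissible μ₁ μ₂ ξ) {x y : X} (hxy : (x, y) ∈ idemSupp ξ) :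
    y ∈ idemSupp μ₂ :=
  mem_idemSupp_of_comp h.2.2 hxy

theorem idemDensityReal_le_left (h : IsAdmissible μ₁ μ₂ ξ) {x y : X}
    (hxy : (x, y) ∈ idemSupp ξ) : idemDensityReal ξ (x, y) ≤ idemDensityReal μ₁ x :=
  idemDensityReal_le_of_comp h.isIPM_left h.2.1 hxy

theorem idemDensityReal_le_right (h : IsAdmissible μ₁ μ₂ ξ) {x y : X}
    (hxy : (x, y) ∈ idemSupp ξ) : idemDensityReal ξ (x, y) ≤ idemDensityReal μ₂ y :=
  idemDensityReal_le_of_comp h.isIPM_right h.2.2 hxy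

theorem swap (h : IsAdmissible μ₁ μ₂ ξ) :
    IsAdmissible μ₂ μ₁ fun φ => ξ (φ.comp ContinuousMap.prodSwap) :=
  ⟨h.1.map_comp _, h.2.2, h.2.1⟩

variable [CompactSpace X] [T2Space X]

theorem exists_left (h : IsAdmissible μ₁ μ₂ ξ) {x : X} (hx : x ∈ idemSupp μ₁) {ε : ℝ}
    (hε : 0 < ε) :
    ∃ y, (x, y) ∈ idemSupp ξ ∧ idemDensityReal μ₁ x - ε < idemDensityReal ξ (x, y) := by
  obtain ⟨⟨x', y⟩, hxy, rfl, hlt⟩ := h.1.exists_mem_idemSupp_fiber h.isIPM_left h.2.1 hx hε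
  exact ⟨y, hxy, hlt⟩

theorem exists_right (h : IsAdmissible μ₁ μ₂ ξ) {y : X} (hy : y ∈ idemSupp μ₂) {ε : ℝ}
    (hε : 0 < ε) :
    ∃ x, (x, y) ∈ idemSupp ξ ∧ idemDensityReal μ₂ y - ε < idemDensityReal ξ (x, y) := by
  obtain ⟨⟨x, y'⟩, hxy, rfl, hlt⟩ := h.1.exists_mem_idemSupp_fiber h.isIPM_right h.2.2 hy hε
  exact ⟨x, hxy, hlt⟩

end IsAdmissible

theorem isAdmissible_diag {μ : C(X, ℝ) → ℝ} (hμ : IsIPM μ) :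
    IsAdmissible μ μ fun φ => μ (φ.comp ((ContinuousMap.id X).prodMk (ContinuousMap.id X))) :=
  ⟨hμ.map_comp _, fun _ => rfl, fun _ => rfl⟩

def idemProd (μ₁ μ₂ : C(X, ℝ) → ℝ) : C(X × X, ℝ) → ℝ :=
  supPlus (fun p : ↥(idemSupp μ₁ ×ˢ idemSupp μ₂) =>
    idemDensityReal μ₁ p.1.1 + idemDensityReal μ₂ p.1.2) Subtype.val

variable [CompactSpace X] in
theorem isAdmissible_idemProd (hμ₁ : IsIPM μ₁) (hμ₂ : IsIPM μ₂) :
    IsAdmissible μ₁ μ₂ (idemProd μ₁ μ₂) := by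
  refine ⟨isIPM_supPlus (fun p => ?_) (fun ε hε => ?_), fun φ => ?_, fun φ => ?_⟩
  · linarith [hμ₁.idemDensityReal_nonpos p.1.1, hμ₂.idemDensityReal_nonpos p.1.2]
  · obtain ⟨x, hx, hx'⟩ := hμ₁.exists_mem_idemSupp_neg_lt (half_pos hε)
    obtain ⟨y, hy, hy'⟩ := hμ₂.exists_mem_idemSupp_neg_lt (half_pos hε)
    exact ⟨⟨(x, y), hx, hy⟩, by linarith⟩
  · refine congrFun (hμ₁.supPlus_eq (π := fun p : ↥(idemSupp μ₁ ×ˢ idemSupp μ₂) => p.1.1)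
      (fun p => ⟨p.2.1, ?_⟩) fun x hx ε hε => ?_) φ
    · linarith [hμ₂.idemDensityReal_nonpos p.1.2]
    · obtain ⟨y, hy, hy'⟩ := hμ₂.exists_mem_idemSupp_neg_lt hε
      exact ⟨⟨(x, y), hx, hy⟩, rfl, by linarith⟩
  · refine congrFun (hμ₂.supPlus_eq (π := fun p : ↥(idemSupp μ₁ ×ˢ idemSupp μ₂) => p.1.2)
      (fun p => ⟨p.2.2, ?_⟩) fun y hy ε hε => ?_) φ
    · linarith [hμ₁.idemDensityReal_nonpos p.1.1]
    · obtain ⟨x, hx, hx'⟩ := hμ₁.exists_mem_idemSupp_neg_lt hε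
      exact ⟨⟨(x, y), hx, hy⟩, rfl, by linarith⟩

end Couplings

section Gluing

variable {X : Type*} [TopologicalSpace X] {μ₁ μ₂ μ₃ : C(X, ℝ) → ℝ} {ξ₁₂ ξ₂₃ : C(X × X, ℝ) → ℝ}

def gluingSet (ξ₁₂ ξ₂₃ : C(X × X, ℝ) → ℝ) : Set (X × X × X) :=
  {t | (t.1, t.2.1) ∈ idemSupp ξ₁₂ ∧ (t.2.1, t.2.2) ∈ idemSupp ξ₂₃}

/-- Idempotent analogue of gluing two couplings along the common marginal `μ₂`: the density of
the first coupling plus the conditional density `d(y, z) - d_{μ₂}(y)` of the second. -/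
def gluingWeight (μ₂ : C(X, ℝ) → ℝ) (ξ₁₂ ξ₂₃ : C(X × X, ℝ) → ℝ) (t : gluingSet ξ₁₂ ξ₂₃) : ℝ :=
  idemDensityReal ξ₁₂ (t.1.1, t.1.2.1) + idemDensityReal ξ₂₃ (t.1.2.1, t.1.2.2) -
    idemDensityReal μ₂ t.1.2.1

def idemCompose (μ₂ : C(X, ℝ) → ℝ) (ξ₁₂ ξ₂₃ : C(X × X, ℝ) → ℝ) : C(X × X, ℝ) → ℝ :=
  supPlus (gluingWeight μ₂ ξ₁₂ ξ₂₃) fun t => (t.1.1, t.1.2.2)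

theorem gluingWeight_nonpos (h₁₂ : IsAdmissible μ₁ μ₂ ξ₁₂) (h₂₃ : IsAdmissible μ₂ μ₃ ξ₂₃)
    (t : gluingSet ξ₁₂ ξ₂₃) : gluingWeight μ₂ ξ₁₂ ξ₂₃ t ≤ 0 := by
  have := h₁₂.idemDensityReal_le_right t.2.1
  have := h₂₃.1.idemDensityReal_nonpos (t.1.2.1, t.1.2.2)
  simp only [gluingWeight]
  linarith

variable [CompactSpace X] [T2Space X]

theorem exists_neg_lt_gluingWeight (h₁₂ : IsAdmissible μ₁ μ₂ ξ₁₂)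
    (h₂₃ : IsAdmissible μ₂ μ₃ ξ₂₃) {ε : ℝ} (hε : 0 < ε) :
    ∃ t, -ε < gluingWeight μ₂ ξ₁₂ ξ₂₃ t := by
  have hε3 : 0 < ε / 3 := by positivity
  obtain ⟨y, hy, hy'⟩ := h₁₂.isIPM_right.exists_mem_idemSupp_neg_lt hε3
  obtain ⟨x, hxy, hx'⟩ := h₁₂.exists_right hy hε3
  obtain ⟨z, hyz, hz'⟩ := h₂₃.exists_left hy hε3
  exact ⟨⟨(x, y, z), hxy, hyz⟩, by simp only [gluingWeight]; linarith⟩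

theorem isAdmissible_idemCompose (h₁₂ : IsAdmissible μ₁ μ₂ ξ₁₂)
    (h₂₃ : IsAdmissible μ₂ μ₃ ξ₂₃) : IsAdmissible μ₁ μ₃ (idemCompose μ₂ ξ₁₂ ξ₂₃) := by
  refine ⟨isIPM_supPlus (gluingWeight_nonpos h₁₂ h₂₃) fun ε => exists_neg_lt_gluingWeight h₁₂ h₂₃,
    fun φ => ?_, fun φ => ?_⟩
  · refine congrFun (h₁₂.isIPM_left.supPlus_eq (π := fun t : gluingSet ξ₁₂ ξ₂₃ => t.1.1)
      (fun t => ⟨h₁₂.fst_mem_idemSupp t.2.1, ?_⟩) fun x hx ε hε => ?_) φ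
    · have := h₁₂.idemDensityReal_le_left t.2.1
      have := h₂₃.idemDensityReal_le_left t.2.2
      simp only [gluingWeight]
      linarith
    · obtain ⟨y, hxy, hy'⟩ := h₁₂.exists_left hx (half_pos hε)
      obtain ⟨z, hyz, hz'⟩ := h₂₃.exists_left (h₁₂.snd_mem_idemSupp hxy) (half_pos hε)
      exact ⟨⟨(x, y, z), hxy, hyz⟩, rfl, by simp only [gluingWeight]; linarith⟩
  · refine congrFun (h₂₃.isIPM_right.supPlus_eq (π := fun t : gluingSet ξ₁₂ ξ₂₃ => t.1.2.2)
      (fun t => ⟨h₂₃.snd_mem_idemSupp t.2.2, ?_⟩) fun z hz ε hε => ?_) φ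
    · have := h₁₂.idemDensityReal_le_right t.2.1
      have := h₂₃.idemDensityReal_le_right t.2.2
      simp only [gluingWeight]
      linarith
    · obtain ⟨y, hyz, hy'⟩ := h₂₃.exists_right hz (half_pos hε)
      obtain ⟨x, hxy, hx'⟩ := h₁₂.exists_right (h₂₃.fst_mem_idemSupp hyz) (half_pos hε)
      exact ⟨⟨(x, y, z), hxy, hyz⟩, rfl, by simp only [gluingWeight]; linarith⟩

end Gluing

section Radius

variable {X : Type*} [MetricSpace X] {μ μ₁ μ₂ μ₃ : C(X, ℝ) → ℝ} {ξ : C(X × X, ℝ) → ℝ}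

/-- `rhoI μ₁ μ₂` is by definition the infimum of `suppRadius ξ` over admissible `ξ`. -/
def suppRadius (ξ : C(X × X, ℝ) → ℝ) : ℝ :=
  sSup {s : ℝ | ∃ p ∈ idemSupp ξ, s = max (ξ (rhoFun X)) (dist p.1 p.2)}

variable [CompactSpace X]

theorem dist_le_suppRadius {p : X × X} (hp : p ∈ idemSupp ξ) : dist p.1 p.2 ≤ suppRadius ξ := by
  have hbdd : BddAbove {s : ℝ | ∃ p ∈ idemSupp ξ, s = max (ξ (rhoFun X)) (dist p.1 p.2)} := by
    refine ⟨max (ξ (rhoFun X)) (Metric.diam (univ : Set X)), ?_⟩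
    rintro _ ⟨q, -, rfl⟩
    exact max_le_max le_rfl
      (Metric.dist_le_diam_of_mem isCompact_univ.isBounded (mem_univ _) (mem_univ _))
  exact (le_max_right _ _).trans (le_csSup hbdd ⟨p, hp, rfl⟩)

/-- `ξ(ρ)` never exceeds the largest distance on the support, so only the latter matters. -/
theorem suppRadius_le (hξ : IsIPM ξ) {R : ℝ} (h : ∀ p ∈ idemSupp ξ, dist p.1 p.2 ≤ R) :
    suppRadius ξ ≤ R := by
  obtain ⟨p, hp⟩ := hξ.idemSupp_nonempty
  refine csSup_le ⟨_, p, hp, rfl⟩ ?_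
  rintro _ ⟨q, hq, rfl⟩
  refine max_le (hξ.le_of_forall_mem_idemSupp fun p hp => ?_) (h q hq)
  linarith [hξ.idemDensityReal_nonpos p, h p hp, show rhoFun X p = dist p.1 p.2 from rfl]

theorem suppRadius_le_of_forall_le (hξ : IsIPM ξ) {R : ℝ}
    (h : ∀ (φ : C(X × X, ℝ)) (c : ℝ), (∀ p : X × X, dist p.1 p.2 ≤ R → φ p ≤ c) → ξ φ ≤ c) :
    suppRadius ξ ≤ R :=
  suppRadius_le hξ fun _ hp =>
    idemSupp_subset_of_forall_le (isClosed_le continuous_dist continuous_const) h hp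

theorem suppRadius_nonneg (hξ : IsIPM ξ) : 0 ≤ suppRadius ξ :=
  let ⟨_, hp⟩ := hξ.idemSupp_nonempty
  dist_nonneg.trans (dist_le_suppRadius hp)

theorem IsAdmissible.dist_le (h : IsAdmissible μ₁ μ₂ ξ) {φ : C(X, ℝ)} {c : ℝ}
    (hφ : ∀ p ∈ idemSupp ξ, dist (φ p.1) (φ p.2) ≤ c) : dist (μ₁ φ) (μ₂ φ) ≤ c := by
  have hφ' : ∀ p ∈ idemSupp ξ, φ p.1 - φ p.2 ≤ c ∧ φ p.2 - φ p.1 ≤ c := fun p hp =>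
    abs_sub_le_iff.mp (hφ p hp)
  rw [← h.2.1, ← h.2.2, Real.dist_eq, abs_sub_le_iff, sub_le_iff_le_add', sub_le_iff_le_add']
  constructor
  · exact h.1.le_add_of_forall_mem_idemSupp fun p hp =>
      show φ p.1 ≤ φ p.2 + c by linarith [(hφ' p hp).1]
  · exact h.1.le_add_of_forall_mem_idemSupp fun p hp =>
      show φ p.2 ≤ φ p.1 + c by linarith [(hφ' p hp).2]

theorem suppRadius_idemCompose_le {ξ₁₂ ξ₂₃ : C(X × X, ℝ) → ℝ} (h₁₂ : IsAdmissible μ₁ μ₂ ξ₁₂)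
    (h₂₃ : IsAdmissible μ₂ μ₃ ξ₂₃) :
    suppRadius (idemCompose μ₂ ξ₁₂ ξ₂₃) ≤ suppRadius ξ₁₂ + suppRadius ξ₂₃ :=
  suppRadius_le_of_forall_le (isAdmissible_idemCompose h₁₂ h₂₃).1 fun _ _ hφ =>
    supPlus_le (gluingWeight_nonpos h₁₂ h₂₃) (fun _ => exists_neg_lt_gluingWeight h₁₂ h₂₃)
      fun t => hφ _ ((dist_triangle _ t.1.2.1 _).trans
        (add_le_add (dist_le_suppRadius t.2.1) (dist_le_suppRadius t.2.2)))

theorem rhoI_le_suppRadius (h : IsAdmissible μ₁ μ₂ ξ) : rhoI μ₁ μ₂ ≤ suppRadius ξ :=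
  csInf_le ⟨0, fun _ ⟨_, h', hr⟩ => hr ▸ suppRadius_nonneg h'.1⟩ ⟨ξ, h, rfl⟩

theorem exists_suppRadius_lt (hμ₁ : IsIPM μ₁) (hμ₂ : IsIPM μ₂) {r : ℝ} (h : rhoI μ₁ μ₂ < r) :
    ∃ ξ, IsAdmissible μ₁ μ₂ ξ ∧ suppRadius ξ < r := by
  have hne : {r | ∃ ξ, IsAdmissible μ₁ μ₂ ξ ∧ r = suppRadius ξ}.Nonempty :=
    ⟨_, idemProd μ₁ μ₂, isAdmissible_idemProd hμ₁ hμ₂, rfl⟩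
  obtain ⟨_, ⟨ξ, hξ, rfl⟩, hlt⟩ := exists_lt_of_csInf_lt hne h
  exact ⟨ξ, hξ, hlt⟩

theorem rhoI_nonneg : 0 ≤ rhoI μ₁ μ₂ :=
  Real.sInf_nonneg fun _ ⟨_, h, hr⟩ => hr ▸ suppRadius_nonneg h.1

theorem rhoI_comm_le (hμ₁ : IsIPM μ₁) (hμ₂ : IsIPM μ₂) : rhoI μ₂ μ₁ ≤ rhoI μ₁ μ₂ := by
  refine le_of_forall_pos_lt_add fun ε hε => ?_
  obtain ⟨ξ, hξ, hlt⟩ := exists_suppRadius_lt hμ₁ hμ₂ (lt_add_of_pos_right _ hε)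
  refine (rhoI_le_suppRadius hξ.swap).trans_lt (lt_of_le_of_lt ?_ hlt)
  refine suppRadius_le hξ.swap.1 fun p hp => ?_
  have hp' : p.swap ∈ idemSupp ξ := mem_idemSupp_of_comp (f := ContinuousMap.prodSwap)
    (fun _ => rfl) hp
  simpa [dist_comm] using dist_le_suppRadius hp'

theorem rhoI_comm (hμ₁ : IsIPM μ₁) (hμ₂ : IsIPM μ₂) : rhoI μ₁ μ₂ = rhoI μ₂ μ₁ :=
  le_antisymm (rhoI_comm_le hμ₂ hμ₁) (rhoI_comm_le hμ₁ hμ₂)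

theorem rhoI_self (hμ : IsIPM μ) : rhoI μ μ = 0 := by
  refine le_antisymm ((rhoI_le_suppRadius (isAdmissible_diag hμ)).trans ?_) rhoI_nonneg
  refine suppRadius_le_of_forall_le (isAdmissible_diag hμ).1 fun φ c hφ => ?_
  exact (hμ.mono_s10 fun x => hφ (x, x) (dist_self x).le).trans_eq (hμ.1 c)

theorem eq_of_rhoI_eq_zero (hμ₁ : IsIPM μ₁) (hμ₂ : IsIPM μ₂) (h : rhoI μ₁ μ₂ = 0) :
    μ₁ = μ₂ := by
  funext φ
  refine eq_of_forall_dist_le fun ε hε => ?_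
  obtain ⟨δ, hδ, hφδ⟩ := Metric.uniformContinuous_iff.mp
    (CompactSpace.uniformContinuous_of_continuous φ.continuous) ε hε
  obtain ⟨ξ, hξ, hr⟩ := exists_suppRadius_lt hμ₁ hμ₂ (h ▸ hδ)
  exact hξ.dist_le fun p hp => (hφδ ((dist_le_suppRadius hp).trans_lt hr)).le

theorem rhoI_triangle (hμ₁ : IsIPM μ₁) (hμ₂ : IsIPM μ₂) (hμ₃ : IsIPM μ₃) :
    rhoI μ₁ μ₃ ≤ rhoI μ₁ μ₂ + rhoI μ₂ μ₃ := by
  refine le_of_forall_pos_lt_add fun ε hε => ?_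
  obtain ⟨ξ₁₂, h₁₂, hr₁₂⟩ := exists_suppRadius_lt hμ₁ hμ₂ (lt_add_of_pos_right _ (half_pos hε))
  obtain ⟨ξ₂₃, h₂₃, hr₂₃⟩ := exists_suppRadius_lt hμ₂ hμ₃ (lt_add_of_pos_right _ (half_pos hε))
  calc rhoI μ₁ μ₃ ≤ suppRadius (idemCompose μ₂ ξ₁₂ ξ₂₃) :=
        rhoI_le_suppRadius (isAdmissible_idemCompose h₁₂ h₂₃)
    _ ≤ suppRadius ξ₁₂ + suppRadius ξ₂₃ := suppRadius_idemCompose_le h₁₂ h₂₃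
    _ < rhoI μ₁ μ₂ + rhoI μ₂ μ₃ + ε := by linarith

end Radius

theorem stmt10 {X : Type*} [MetricSpace X] [CompactSpace X] :
    ∀ μ₁ μ₂ μ₃ : C(X, ℝ) → ℝ, IsIPM μ₁ → IsIPM μ₂ → IsIPM μ₃ →
      0 ≤ rhoI μ₁ μ₂ ∧ rhoI μ₁ μ₂ = rhoI μ₂ μ₁ ∧
        (rhoI μ₁ μ₂ = 0 ↔ μ₁ = μ₂) ∧
        rhoI μ₁ μ₃ ≤ rhoI μ₁ μ₂ + rhoI μ₂ μ₃ := by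
  intro μ₁ μ₂ μ₃ hμ₁ hμ₂ hμ₃
  exact ⟨rhoI_nonneg, rhoI_comm hμ₁ hμ₂,
    ⟨eq_of_rhoI_eq_zero hμ₁ hμ₂, fun h => h ▸ rhoI_self hμ₁⟩, rhoI_triangle hμ₁ hμ₂ hμ₃⟩
end
end

section
/- Let (X, ρ) be a compact metric space. For all x, y ∈ X, ρ_I(δ_x, δ_y) = ρ(x, y); that is, the metric ρ_I on the idempotent probability measures extends the metric ρ via the embedding x ↦ δ_x. -/
noncomputable section

lemma ipm_mono_s11 {Z : Type*} [TopologicalSpace Z] {μ : C(Z, ℝ) → ℝ} (h : IsIPM μ)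
    {f g : C(Z, ℝ)} (hfg : f ≤ g) : μ f ≤ μ g := by
  have h3 := h.2.2 f g
  rw [sup_eq_right.mpr hfg] at h3
  rw [h3]; exact le_max_left _ _

lemma bump_exists {W : Type*} [MetricSpace W] {u v : W} (huv : u ≠ v) {c : ℝ} (hc : c ≤ 0) :
    ∃ ψ : C(W, ℝ), ψ ≤ 0 ∧ ψ u = 0 ∧ ψ v = c := by
  have hd : 0 < dist v u := dist_pos.mpr (Ne.symm huv)
  set K : ℝ := -c / dist v u with hK
  have hK0 : 0 ≤ K := div_nonneg (by linarith) hd.le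
  refine ⟨⟨fun w => max c (-(K * dist w u)),
      continuous_const.max ((continuous_const.mul
        (continuous_id.dist continuous_const)).neg)⟩, ?_, ?_, ?_⟩
  · intro w
    have : 0 ≤ K * dist w u := mul_nonneg hK0 dist_nonneg
    show max c (-(K * dist w u)) ≤ (0 : C(W, ℝ)) w
    simp only [ContinuousMap.zero_apply]
    exact max_le hc (by linarith)
  · simp only [ContinuousMap.coe_mk, dist_self, mul_zero, neg_zero]
    exact max_eq_right hc
  · simp only [ContinuousMap.coe_mk, hK]
    rw [div_mul_cancel₀ _ hd.ne']
    simp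

lemma density_bot {Z : Type*} [TopologicalSpace Z] {μ : C(Z, ℝ) → ℝ} {z : Z}
    (h : ∀ c : ℝ, c ≤ 0 → ∃ φ : C(Z, ℝ), φ ≤ 0 ∧ φ z = 0 ∧ μ φ = c) :
    idemDensity μ z = ⊥ := by
  rw [idemDensity, sInf_eq_bot]
  intro b hb
  induction b with
  | bot => exact absurd hb (lt_irrefl _)
  | coe r =>
      obtain ⟨φ, h0, hz, hμ⟩ := h (min (r - 1) 0) (min_le_right _ _)
      refine ⟨((min (r - 1) 0 : ℝ) : EReal), ⟨φ, h0, hz, by rw [hμ]⟩, ?_⟩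
      exact_mod_cast lt_of_le_of_lt (min_le_left _ _) (by linarith : r - 1 < r)
  | top =>
      obtain ⟨φ, h0, hz, hμ⟩ := h 0 le_rfl
      exact ⟨((0 : ℝ) : EReal), ⟨φ, h0, hz, by rw [hμ]⟩, by simp⟩

lemma supp_nonempty {Z : Type*} [TopologicalSpace Z] [CompactSpace Z] [Nonempty Z]
    {μ : C(Z, ℝ) → ℝ} (h : IsIPM μ) : ∃ z, z ∈ idemSupp μ := by
  by_contra hs
  push_neg at hs
  have hbot : ∀ z : Z, idemDensity μ z = ⊥ := fun z =>
    le_bot_iff.mp (not_lt.mp fun hlt => hs z hlt)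
  have hφ : ∀ z : Z, ∃ φ : C(Z, ℝ), φ ≤ 0 ∧ φ z = 0 ∧ μ φ < -1 := by
    intro z
    have hlt : idemDensity μ z < (((-1 : ℝ)) : EReal) := by
      rw [hbot z]; exact EReal.bot_lt_coe _
    rw [idemDensity] at hlt
    obtain ⟨a, ⟨φ, h0, hz, ha⟩, halt⟩ := sInf_lt_iff.mp hlt
    exact ⟨φ, h0, hz, by exact_mod_cast ha ▸ halt⟩
  choose φ hφ0 hφz hφμ using hφ
  set U : Z → Set Z := fun z => {w | -(1/2 : ℝ) < φ z w} with hU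
  have hUopen : ∀ z, IsOpen (U z) := fun z =>
    isOpen_lt continuous_const (φ z).continuous
  have hmem : ∀ z, z ∈ U z := fun z => by simp [hU, hφz z]
  obtain ⟨t, ht⟩ := isCompact_univ.elim_finite_subcover U hUopen
    (fun w _ => Set.mem_iUnion.mpr ⟨w, hmem w⟩)
  have htne : t.Nonempty := by
    obtain ⟨i, hi, -⟩ := Set.mem_iUnion₂.mp (ht (Set.mem_univ (Classical.arbitrary Z)))
    exact ⟨i, hi⟩
  set g : C(Z, ℝ) := t.sup' htne φ with hg
  have hmax : ∀ a b : C(Z, ℝ), μ (a ⊔ b) = μ a ⊔ μ b := h.2.2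
  have h1 : μ g = t.sup' htne (μ ∘ φ) :=
    Finset.comp_sup'_eq_sup'_comp htne μ hmax
  have h2 : μ g < -1 := by
    rw [h1]
    exact (Finset.sup'_lt_iff htne).mpr fun i _ => hφμ i
  have h3 : ContinuousMap.const Z (-(1/2 : ℝ)) ≤ g := by
    intro w
    obtain ⟨i, hi, hwi⟩ := Set.mem_iUnion₂.mp (ht (Set.mem_univ w))
    have : φ i w ≤ g w := by
      rw [hg, ContinuousMap.sup'_apply]
      exact Finset.le_sup' (fun j => φ j w) hi
    have hwi' : -(1/2 : ℝ) < φ i w := hwi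
    simpa using le_of_lt (lt_of_lt_of_le hwi' this)
  have h4 : (-(1/2 : ℝ)) ≤ μ g := by
    have := ipm_mono_s11 h h3
    rwa [h.1] at this
  linarith

theorem stmt11 {X : Type*} [MetricSpace X] [CompactSpace X] (x y : X) :
    rhoI (fun φ : C(X, ℝ) => φ x) (fun φ : C(X, ℝ) => φ y) = dist x y := by
  set δ : C(X × X, ℝ) → ℝ := fun φ => φ (x, y) with hδ
  have hδipm : IsIPM δ := by
    refine ⟨fun c => rfl, fun c φ => rfl, fun φ ψ => rfl⟩
  have hδadm : IsAdmissible (fun φ : C(X, ℝ) => φ x) (fun φ : C(X, ℝ) => φ y) δ :=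
    ⟨hδipm, fun φ => rfl, fun φ => rfl⟩
  -- support of any admissible ξ is {(x,y)}
  have hsupp : ∀ ξ : C(X × X, ℝ) → ℝ,
      IsAdmissible (fun φ : C(X, ℝ) => φ x) (fun φ : C(X, ℝ) => φ y) ξ →
      idemSupp ξ = {(x, y)} := by
    intro ξ hξ
    have hsub : idemSupp ξ ⊆ {(x, y)} := by
      intro z hz
      by_contra hne
      have hne' : z ≠ (x, y) := hne
      have hbot : idemDensity ξ z = ⊥ := by
        rcases (Prod.ext_iff.not.mp hne') |> not_and_or.mp with h1 | h2
        · apply density_bot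
          intro c hc
          obtain ⟨ψ, hψ0, hψu, hψv⟩ := bump_exists h1 hc
          refine ⟨ψ.comp ⟨Prod.fst, continuous_fst⟩, fun w => hψ0 w.1, hψu, ?_⟩
          rw [hξ.2.1 ψ]; exact hψv
        · apply density_bot
          intro c hc
          obtain ⟨ψ, hψ0, hψu, hψv⟩ := bump_exists h2 hc
          refine ⟨ψ.comp ⟨Prod.snd, continuous_snd⟩, fun w => hψ0 w.2, hψu, ?_⟩
          rw [hξ.2.2 ψ]; exact hψv
      rw [idemSupp, Set.mem_setOf_eq, hbot] at hz
      exact absurd hz (lt_irrefl _)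
    have : Nonempty (X × X) := ⟨(x, y)⟩
    obtain ⟨z, hzmem⟩ := supp_nonempty hξ.1
    have hz' : z = (x, y) := hsub hzmem
    apply Set.eq_singleton_iff_unique_mem.mpr
    exact ⟨hz' ▸ hzmem, fun w hw => hsub hw⟩
  -- the inner sup for any admissible ξ
  have hinner : ∀ ξ : C(X × X, ℝ) → ℝ,
      IsAdmissible (fun φ : C(X, ℝ) => φ x) (fun φ : C(X, ℝ) => φ y) ξ →
      sSup {s : ℝ | ∃ p ∈ idemSupp ξ, s = max (ξ (rhoFun X)) (dist p.1 p.2)}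
        = max (ξ (rhoFun X)) (dist x y) := by
    intro ξ hξ
    have : {s : ℝ | ∃ p ∈ idemSupp ξ, s = max (ξ (rhoFun X)) (dist p.1 p.2)}
        = {max (ξ (rhoFun X)) (dist x y)} := by
      rw [hsupp ξ hξ]
      ext s
      simp [eq_comm]
    rw [this, csSup_singleton]
  rw [rhoI]
  have hmemδ : dist x y ∈ {r : ℝ | ∃ ξ : C(X × X, ℝ) → ℝ,
      IsAdmissible (fun φ : C(X, ℝ) => φ x) (fun φ : C(X, ℝ) => φ y) ξ ∧
      r = sSup {s : ℝ | ∃ p ∈ idemSupp ξ, s = max (ξ (rhoFun X)) (dist p.1 p.2)}} := by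
    refine ⟨δ, hδadm, ?_⟩
    rw [hinner δ hδadm]
    have : δ (rhoFun X) = dist x y := rfl
    rw [this, max_self]
  have hlb : ∀ r ∈ {r : ℝ | ∃ ξ : C(X × X, ℝ) → ℝ,
      IsAdmissible (fun φ : C(X, ℝ) => φ x) (fun φ : C(X, ℝ) => φ y) ξ ∧
      r = sSup {s : ℝ | ∃ p ∈ idemSupp ξ, s = max (ξ (rhoFun X)) (dist p.1 p.2)}},
      dist x y ≤ r := by
    rintro r ⟨ξ, hξ, rfl⟩
    rw [hinner ξ hξ]
    exact le_max_right _ _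
  exact le_antisymm (csInf_le ⟨dist x y, hlb⟩ hmemδ) (le_csInf ⟨_, hmemδ⟩ hlb)
end
end

section
/- Let X be a compact Hausdorff space and x, y ∈ X. The Dirac measure δ_{(x,y)} on X × X is the unique (δ_x, δ_y)-admissible idempotent probability measure: if ξ is an idempotent probability measure on X × X with ξ(φ ∘ π₁) = φ(x) and ξ(φ ∘ π₂) = φ(y) for all φ ∈ C(X), then ξ(ψ) = ψ(x, y) for all ψ ∈ C(X × X). -/
noncomputable section

theorem stmt12 {X : Type*} [TopologicalSpace X] [CompactSpace X] [T2Space X]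
    (x y : X) (ξ : C(X × X, ℝ) → ℝ) (hξ : IsIPM ξ)
    (h₁ : ∀ φ : C(X, ℝ), ξ (φ.comp ⟨Prod.fst, continuous_fst⟩) = φ x)
    (h₂ : ∀ φ : C(X, ℝ), ξ (φ.comp ⟨Prod.snd, continuous_snd⟩) = φ y) :
    ∀ ψ : C(X × X, ℝ), ξ ψ = ψ (x, y) := by
  obtain ⟨hconst, hadd, hmax⟩ := hξ
  have hmono : ∀ φ χ : C(X × X, ℝ), φ ≤ χ → ξ φ ≤ ξ χ := by
    intro φ χ h
    have h2 := hmax φ χ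
    rw [sup_eq_right.mpr h] at h2
    rw [h2]
    exact le_max_left _ _
  intro ψ
  have key : ∀ ε : ℝ, 0 < ε → ψ (x, y) - ε ≤ ξ ψ ∧ ξ ψ ≤ ψ (x, y) + ε := by
    intro ε hε
    set M : ℝ := ‖ψ‖ + ε + 1 with hM
    have hnn : (0:ℝ) ≤ ‖ψ‖ := norm_nonneg _
    have hb : ∀ p : X × X, |ψ p| ≤ ‖ψ‖ := by
      intro p
      simpa [Real.norm_eq_abs] using ψ.norm_coe_le_norm p
    have hMpos : 0 < M := by
      have := hnn; dsimp [M] at *; linarith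
    have hψM : ∀ p : X × X, ψ p ≤ M := by
      intro p
      have := (abs_le.mp (hb p)).2; dsimp [M]; linarith
    have hψM' : ∀ p : X × X, -M ≤ ψ p := by
      intro p
      have := (abs_le.mp (hb p)).1; dsimp [M]; linarith
    -- neighborhood where ψ is ε-close to ψ (x, y)
    have hW : ψ ⁻¹' Metric.ball (ψ (x, y)) ε ∈ nhds (x, y) := by
      exact ψ.continuous.continuousAt.preimage_mem_nhds (Metric.ball_mem_nhds _ hε)
    obtain ⟨U, V, hUo, hxU, hVo, hyV, hUV⟩ := mem_nhds_prod_iff'.mp hW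
    -- Urysohn functions
    obtain ⟨f, hf0, hf1, hf01⟩ := exists_continuous_zero_one_of_isClosed
      (isClosed_singleton (x := x)) (isClosed_compl_iff.mpr hUo)
      (by simp [Set.disjoint_singleton_left, hxU])
    obtain ⟨g, hg0, hg1, hg01⟩ := exists_continuous_zero_one_of_isClosed
      (isClosed_singleton (x := y)) (isClosed_compl_iff.mpr hVo)
      (by simp [Set.disjoint_singleton_left, hyV])
    set φ₁ : C(X, ℝ) := (4 * M) • f - ContinuousMap.const X (2 * M) with hφ₁
    set φ₂ : C(X, ℝ) := (4 * M) • g - ContinuousMap.const X (2 * M) with hφ₂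
    have hφ₁x : φ₁ x = -(2 * M) := by
      have : f x = 0 := hf0 rfl
      simp [hφ₁, this]
    have hφ₂y : φ₂ y = -(2 * M) := by
      have : g y = 0 := hg0 rfl
      simp [hφ₂, this]
    have hφ₁out : ∀ t : X, t ∉ U → φ₁ t = 2 * M := by
      intro t ht
      have : f t = 1 := hf1 ht
      simp [hφ₁, this]; ring
    have hφ₂out : ∀ t : X, t ∉ V → φ₂ t = 2 * M := by
      intro t ht
      have : g t = 1 := hg1 ht
      simp [hφ₂, this]; ring
    set A : C(X × X, ℝ) :=
      (φ₁.comp ⟨Prod.fst, continuous_fst⟩) ⊔ (φ₂.comp ⟨Prod.snd, continuous_snd⟩) with hA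
    have hξA : ξ A = -(2 * M) := by
      rw [hA, hmax, h₁, h₂, hφ₁x, hφ₂y, max_self]
    have hAout : ∀ p : X × X, p ∉ U ×ˢ V → A p = 2 * M := by
      intro p hp
      rw [Set.mem_prod] at hp
      push_neg at hp
      have hApt : A p = max (φ₁ p.1) (φ₂ p.2) := rfl
      rw [hApt]
      have hφ₁le : φ₁ p.1 ≤ 2 * M := by
        have := (hf01 p.1).2
        simp only [hφ₁, ContinuousMap.sub_apply, ContinuousMap.smul_apply,
          ContinuousMap.const_apply, smul_eq_mul]
        nlinarith
      have hφ₂le : φ₂ p.2 ≤ 2 * M := by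
        have := (hg01 p.2).2
        simp only [hφ₂, ContinuousMap.sub_apply, ContinuousMap.smul_apply,
          ContinuousMap.const_apply, smul_eq_mul]
        nlinarith
      by_cases h : p.1 ∈ U
      · rw [hφ₂out p.2 (hp h)]
        exact max_eq_right hφ₁le
      · rw [hφ₁out p.1 h]
        exact max_eq_left hφ₂le
    have hnear : ∀ p : X × X, p ∈ U ×ˢ V → |ψ p - ψ (x, y)| < ε := by
      intro p hp
      have := hUV hp
      simpa [Metric.mem_ball, Real.dist_eq] using this
    constructor
    · -- lower bound
      have hle : ContinuousMap.const (X × X) (ψ (x, y) - ε) ≤ ψ ⊔ A := by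
        rw [ContinuousMap.le_def]
        intro p
        simp only [ContinuousMap.const_apply, ContinuousMap.sup_apply]
        by_cases hp : p ∈ U ×ˢ V
        · have := hnear p hp
          have := (abs_lt.mp this).1
          exact le_max_of_le_left (by linarith)
        · rw [hAout p hp]
          have hxy := hψM (x, y)
          exact le_max_of_le_right (by linarith)
      have := hmono _ _ hle
      rw [hconst, hmax, hξA] at this
      have hlt : -(2 * M) < ψ (x, y) - ε := by
        have := hψM' (x, y); dsimp [M] at *; linarith
      rcases le_or_gt (ξ ψ) (-(2 * M)) with h | h
      · rw [max_eq_right h] at this; linarith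
      · rcases max_cases (ξ ψ) (-(2*M)) with ⟨he, _⟩ | ⟨he, hle2⟩
        · rw [he] at this; exact this
        · linarith
    · -- upper bound
      have hle : ψ ≤ ContinuousMap.const (X × X) (ψ (x, y) + ε) ⊔ A := by
        rw [ContinuousMap.le_def]
        intro p
        simp only [ContinuousMap.const_apply, ContinuousMap.sup_apply]
        by_cases hp : p ∈ U ×ˢ V
        · have := (abs_lt.mp (hnear p hp)).2
          exact le_max_of_le_left (by linarith)
        · rw [hAout p hp]
          have := hψM p
          exact le_max_of_le_right (by linarith)
      have := hmono _ _ hle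
      rw [hmax, hconst, hξA] at this
      have : ξ ψ ≤ max (ψ (x, y) + ε) (-(2 * M)) := this
      have h2M : -(2 * M) ≤ ψ (x, y) + ε := by
        have := hψM' (x, y); dsimp [M] at *; linarith
      rw [max_eq_left h2M] at this
      exact this
  apply le_antisymm
  · apply le_of_forall_pos_le_add
    intro ε hε
    exact (key ε hε).2
  · apply le_of_forall_pos_le_add
    intro ε hε
    have := (key ε hε).1
    linarith
end
end

section
/- Let X be a compact Hausdorff space, ν an idempotent probability measure on X, and A ⊆ X a closed subset. Then there exists an idempotent probability measure ν' on A (with its subspace topology) such that ν(φ) = ν'(φ|_A) for all φ ∈ C(X) if and only if supp ν ⊆ A, i.e. {x ∈ X : d_ν(x) > -∞} ⊆ A. -/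
noncomputable section

section Aux

variable {X : Type*} [TopologicalSpace X]

lemma IsIPM_mono {ν : C(X, ℝ) → ℝ} (hν : IsIPM ν) {φ ψ : C(X, ℝ)} (h : φ ≤ ψ) :
    ν φ ≤ ν ψ := by
  have h2 := hν.2.2 φ ψ
  rw [sup_eq_right.mpr h] at h2
  exact (le_max_left (ν φ) (ν ψ)).trans h2.ge

lemma exists_small {ν : C(X, ℝ) → ℝ} {x : X} (hx : x ∉ idemSupp ν) (r : ℝ) :
    ∃ g : C(X, ℝ), g ≤ 0 ∧ g x = 0 ∧ ν g < r := by
  have hbot : idemDensity ν x = ⊥ := by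
    simpa [idemSupp, bot_lt_iff_ne_bot, not_not] using hx
  have := sInf_eq_bot.mp hbot (r : EReal) (EReal.bot_lt_coe r)
  obtain ⟨a, ⟨g, hg0, hgx, rfl⟩, ha⟩ := this
  exact ⟨g, hg0, hgx, by exact_mod_cast ha⟩

lemma key_le [CompactSpace X] [T2Space X]
    {ν : C(X, ℝ) → ℝ} (hν : IsIPM ν) {A : Set X} (hsupp : idemSupp ν ⊆ A)
    {φ ψ : C(X, ℝ)} (h : ∀ a ∈ A, φ a ≤ ψ a) : ν φ ≤ ν ψ := by
  refine le_of_forall_pos_le_add fun ε hε => ?_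
  set M : ℝ := ‖φ‖ + ‖ψ‖ + 1 with hM
  have hM1 : (1:ℝ) ≤ M := by
    have := norm_nonneg φ; have := norm_nonneg ψ; simp only [hM]; linarith
  have hφM : ∀ y, φ y ≤ M := fun y => by
    have h1 : |φ y| ≤ ‖φ‖ := by
      simpa using φ.norm_coe_le_norm y
    have := norm_nonneg ψ
    calc φ y ≤ |φ y| := le_abs_self _
      _ ≤ M := by simp only [hM]; linarith
  set K : Set X := {y | ψ y + ε ≤ φ y} with hKdef
  have hKclosed : IsClosed K := isClosed_le (by continuity) φ.continuous
  have hKsupp : ∀ y ∈ K, y ∉ idemSupp ν := by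
    intro y hy hyS
    have hyA := hsupp hyS
    have := h y hyA
    have hy' : ψ y + ε ≤ φ y := hy
    linarith
  by_cases hK : K.Nonempty
  · have Hg : ∀ y : K, ∃ g : C(X, ℝ), g ≤ 0 ∧ g (y:X) = 0 ∧
        ν g < ν ψ + ε - (1 + 2*M) := fun y => exists_small (hKsupp y y.2) _
    choose g hg0 hgx hgν using Hg
    have hcov : K ⊆ ⋃ y : K, {z | -1 < g y z} := fun z hz =>
      Set.mem_iUnion.mpr ⟨⟨z, hz⟩, by simp [hgx ⟨z, hz⟩]⟩
    obtain ⟨t, ht⟩ := (hKclosed.isCompact).elim_finite_subcover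
      (fun y : K => {z | -1 < g y z})
      (fun y => isOpen_lt continuous_const (g y).continuous) hcov
    obtain ⟨z0, hz0⟩ := hK
    have htne : t.Nonempty := by
      rcases Set.mem_iUnion₂.mp (ht hz0) with ⟨i, hi, _⟩
      exact ⟨i, hi⟩
    set G : C(X, ℝ) := t.sup' htne g with hGdef
    let νh : SupHom C(X, ℝ) ℝ := ⟨ν, fun a b => hν.2.2 a b⟩
    have hνG : ν G = t.sup' htne (fun y => ν (g y)) := map_finset_sup' νh htne g
    have hGν : ν G < ν ψ + ε - (1 + 2*M) := by
      rw [hνG]; exact Finset.sup'_lt_iff htne |>.mpr fun i _ => hgν i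
    have hGK : ∀ z ∈ K, -1 < G z := by
      intro z hz
      rcases Set.mem_iUnion₂.mp (ht hz) with ⟨i, hit, hiz⟩
      have : g i z ≤ G z := by
        have := Finset.le_sup' (fun y : K => g y) hit
        calc g i z ≤ (t.sup' htne g) z := by
              have h3 : g i ≤ t.sup' htne g := Finset.le_sup' g hit
              exact h3 z
          _ = G z := rfl
      exact lt_of_lt_of_le hiz this
    have hpt : φ ≤ (ContinuousMap.const X ε + ψ) ⊔ (ContinuousMap.const X (1+2*M) + G) := by
      rw [ContinuousMap.le_def]
      intro z
      simp only [ContinuousMap.sup_apply, ContinuousMap.add_apply, ContinuousMap.const_apply]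
      by_cases hz : z ∈ K
      · refine le_max_of_le_right ?_
        have := hGK z hz
        have := hφM z
        linarith
      · refine le_max_of_le_left ?_
        have : ¬ (ψ z + ε ≤ φ z) := hz
        linarith
    calc ν φ ≤ ν ((ContinuousMap.const X ε + ψ) ⊔ (ContinuousMap.const X (1+2*M) + G)) :=
          IsIPM_mono hν hpt
      _ = max (ε + ν ψ) ((1+2*M) + ν G) := by
          rw [hν.2.2, hν.2.1, hν.2.1]
      _ ≤ ν ψ + ε := by
          apply max_le (by linarith)
          linarith
  · have hpt : φ ≤ ContinuousMap.const X ε + ψ := by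
      rw [ContinuousMap.le_def]
      intro z
      have : z ∉ K := fun hz => hK ⟨z, hz⟩
      have : ¬ (ψ z + ε ≤ φ z) := this
      show φ z ≤ ContinuousMap.const X ε z + ψ z
      simp only [ContinuousMap.const_apply]
      linarith
    calc ν φ ≤ ν (ContinuousMap.const X ε + ψ) := IsIPM_mono hν hpt
      _ = ε + ν ψ := hν.2.1 _ _
      _ = ν ψ + ε := by ring

lemma key_eq [CompactSpace X] [T2Space X]
    {ν : C(X, ℝ) → ℝ} (hν : IsIPM ν) {A : Set X} (hsupp : idemSupp ν ⊆ A)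
    {φ ψ : C(X, ℝ)} (h : ∀ a ∈ A, φ a = ψ a) : ν φ = ν ψ :=
  le_antisymm (key_le hν hsupp fun a ha => (h a ha).le)
    (key_le hν hsupp fun a ha => (h a ha).ge)

end Aux

theorem stmt16 {X : Type*} [TopologicalSpace X] [CompactSpace X] [T2Space X]
    (ν : C(X, ℝ) → ℝ) (hν : IsIPM ν) (A : Set X) (hA : IsClosed A) :
    (∃ ν' : C(A, ℝ) → ℝ, IsIPM ν' ∧ ∀ φ : C(X, ℝ), ν φ = ν' (φ.restrict A)) ↔
      idemSupp ν ⊆ A := by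
  constructor
  · rintro ⟨ν', hν', hrest⟩ x hx
    by_contra hxA
    have hd : ∀ n : ℕ, idemDensity ν x ≤ ((-(n : ℝ) : ℝ) : EReal) := by
      intro n
      obtain ⟨f, hf0, hf1, hf01⟩ := exists_continuous_zero_one_of_isClosed
        isClosed_singleton hA (Set.disjoint_singleton_left.mpr hxA)
      set φ : C(X, ℝ) := (-(n : ℝ)) • f with hφdef
      have hφ0 : φ ≤ 0 := by
        rw [ContinuousMap.le_def]
        intro z
        have := (hf01 z).1
        have : -(n : ℝ) * f z ≤ 0 :=
          mul_nonpos_of_nonpos_of_nonneg (neg_nonpos.mpr (Nat.cast_nonneg n)) this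
        simpa [hφdef] using this
      have hφx : φ x = 0 := by
        have : f x = 0 := hf0 rfl
        simp [hφdef, this]
      have hνφ : ν φ = -(n : ℝ) := by
        rw [hrest φ]
        have hres : φ.restrict A = ContinuousMap.const A (-(n : ℝ)) := by
          ext a
          have : f (a : X) = 1 := hf1 a.2
          simp [hφdef, this]
        rw [hres, hν'.1]
      have hmem : ((ν φ : ℝ) : EReal) ∈
          {r : EReal | ∃ φ : C(X, ℝ), φ ≤ 0 ∧ φ x = 0 ∧ r = (ν φ : EReal)} :=
        ⟨φ, hφ0, hφx, rfl⟩
      have := sInf_le hmem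
      rw [hνφ] at this
      exact this
    have hbot : idemDensity ν x = ⊥ := by
      rw [EReal.eq_bot_iff_forall_lt]
      intro y
      obtain ⟨n, hn⟩ := exists_nat_gt (-y)
      refine (hd n).trans_lt ?_
      exact_mod_cast (by linarith : -(n : ℝ) < y)
    have : ⊥ < idemDensity ν x := hx
    rw [hbot] at this
    exact lt_irrefl _ this
  · intro hsupp
    have hext : ∀ ψ : C(A, ℝ), ∃ g : C(X, ℝ), g.restrict A = ψ := fun ψ =>
      ContinuousMap.exists_restrict_eq hA ψ
    choose E hE using hext
    have hEa : ∀ (ψ : C(A, ℝ)) (a : X) (ha : a ∈ A), E ψ a = ψ ⟨a, ha⟩ := by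
      intro ψ a ha
      have := ContinuousMap.congr_fun (hE ψ) ⟨a, ha⟩
      simpa [ContinuousMap.restrict_apply] using this
    refine ⟨fun ψ => ν (E ψ), ⟨?_, ?_, ?_⟩, ?_⟩
    · intro c
      show ν (E (ContinuousMap.const (↥A) c)) = c
      have : ν (E (ContinuousMap.const (↥A) c)) = ν (ContinuousMap.const X c) :=
        key_eq hν hsupp fun a ha => by
          simp [hEa (ContinuousMap.const (↥A) c) a ha]
      rw [this, hν.1]
    · intro c ψ
      show ν (E (ContinuousMap.const (↥A) c + ψ)) = c + ν (E ψ)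
      have : ν (E (ContinuousMap.const (↥A) c + ψ)) = ν (ContinuousMap.const X c + E ψ) :=
        key_eq hν hsupp fun a ha => by
          simp [hEa (ContinuousMap.const (↥A) c + ψ) a ha, hEa ψ a ha]
      rw [this, hν.2.1]
    · intro ψ₁ ψ₂
      show ν (E (ψ₁ ⊔ ψ₂)) = max (ν (E ψ₁)) (ν (E ψ₂))
      have : ν (E (ψ₁ ⊔ ψ₂)) = ν (E ψ₁ ⊔ E ψ₂) :=
        key_eq hν hsupp fun a ha => by
          simp [hEa (ψ₁ ⊔ ψ₂) a ha, hEa ψ₁ a ha, hEa ψ₂ a ha]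
      rw [this, hν.2.2]
    · intro φ
      exact (key_eq hν hsupp fun a ha => by
        simp [hEa (φ.restrict A) a ha]).symm
end
end
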